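/- arXiv:1308.4942 — 5 statements merged into one kernel-verified Lean document; each statement's English description precedes it below -/
import Mathlib

section
/- Let G be a connected bipartite weighted graph on N ≥ 2 vertices with parts V_1 and V_1^c, and let v be any nonzero eigenvector of the combinatorial graph Laplacian L associated with its largest eigenvalue λ_max. Then v(i)·v(j) > 0 whenever i and j both lie in V_1 or both lie in V_1^c, and v(i)·v(j) < 0 whenever one of i, j lies in V_1 and the other in V_1^c. In particular, v has no zero component and the set {i : v(i) ≥ 0} equals V_1 or V_1^c. -/
/-!
Let `σ = ±1` record the side of the bipartition and `w = σ|v|`. Across an edge `σ` changes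
sign, so `(v i - v j)² ≤ (|v i| + |v j|)² = (w i - w j)²`; hence the Laplacian quadratic form
at `w` dominates the one at `v`, while `‖w‖ = ‖v‖`. As `v` maximizes the Rayleigh quotient,
so does `w`: it is again a `λ_max`-eigenvector, and equality holds on every edge, i.e.
`v i v j = -|v i||v j|`. All neighbours of a vertex carry the same sign in `w`, so the
eigen-equation for `w` at a zero of `v` forces `v` to vanish on the neighbours; by connectivity
`v` has no zero. Thus `v` changes sign across every edge and `σ v` has constant sign.
-/

open Matrix

noncomputable def deg {n : Type*} [Fintype n] (W : Matrix n n ℝ) (i : n) : ℝ := ∑ j, W i j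

noncomputable def lap {n : Type*} [Fintype n] [DecidableEq n] (W : Matrix n n ℝ) :
    Matrix n n ℝ :=
  Matrix.diagonal (deg W) - W

def IsConn {n : Type*} (W : Matrix n n ℝ) : Prop :=
  ∀ i j : n, Relation.ReflTransGen (fun a b => 0 < W a b) i j

def IsBipartiteWith {n : Type*} (W : Matrix n n ℝ) (V1 : Set n) : Prop :=
  ∀ i j, 0 < W i j → (i ∈ V1 ↔ j ∉ V1)

open Classical in
noncomputable def sortedEigs {n : Type*} [Fintype n] [DecidableEq n] (A : Matrix n n ℝ) :
    Fin (Fintype.card n) → ℝ :=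
  if h : A.IsHermitian then
    (fun i => h.eigenvalues ((Fintype.equivFin n).symm i)) ∘
      ⇑(Tuple.sort fun i => h.eigenvalues ((Fintype.equivFin n).symm i))
  else 0

noncomputable def kron {n : Type*} [Fintype n] [DecidableEq n] (L : Matrix n n ℝ)
    (V1 : Finset n) : Matrix ↥V1 ↥V1 ℝ :=
  L.submatrix (Subtype.val : ↥V1 → n) (Subtype.val : ↥V1 → n) -
    L.submatrix (Subtype.val : ↥V1 → n) (Subtype.val : ↥(V1ᶜ) → n) *
      (L.submatrix (Subtype.val : ↥(V1ᶜ) → n) (Subtype.val : ↥(V1ᶜ) → n))⁻¹ *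
      L.submatrix (Subtype.val : ↥(V1ᶜ) → n) (Subtype.val : ↥V1 → n)

noncomputable def wred {m : Type*} [DecidableEq m] (K : Matrix m m ℝ) : Matrix m m ℝ :=
  Matrix.of fun i j => if i = j then 0 else -K i j

section Rayleigh

variable {n : Type*} [Fintype n] [DecidableEq n] {A : Matrix n n ℝ} {t : ℝ}

open scoped MatrixOrder in
lemma Matrix.IsHermitian.posSemidef_smul_one_sub (hA : A.IsHermitian)
    (ht : ∀ i, hA.eigenvalues i ≤ t) : (t • 1 - A).PosSemidef := by
  have hle : A ≤ algebraMap ℝ (Matrix n n ℝ) t := by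
    refine le_algebraMap_of_spectrum_le ?_ hA
    rw [hA.spectrum_real_eq_range_eigenvalues]
    rintro _ ⟨i, rfl⟩
    exact ht i
  rwa [Matrix.le_iff, Algebra.algebraMap_eq_smul_one] at hle

lemma Matrix.IsHermitian.eigenvalues_le_sortedEigs (hA : A.IsHermitian)
    {m : Fin (Fintype.card n)} (hm : IsTop m) (k : n) :
    hA.eigenvalues k ≤ sortedEigs A m := by
  set g : Fin (Fintype.card n) → ℝ := fun i => hA.eigenvalues ((Fintype.equivFin n).symm i)
  have hk : hA.eigenvalues k = g (Tuple.sort g ((Tuple.sort g)⁻¹ (Fintype.equivFin n k))) := by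
    simp [g]
  rw [sortedEigs, dif_pos hA, hk]
  exact Tuple.monotone_sort g (hm _)

lemma dotProduct_mulVec_le_of_posSemidef (ht : (t • 1 - A).PosSemidef) (x : n → ℝ) :
    x ⬝ᵥ (A *ᵥ x) ≤ t * (x ⬝ᵥ x) := by
  have h := ht.dotProduct_mulVec_nonneg x
  simp only [star_trivial, sub_mulVec, smul_mulVec, one_mulVec, dotProduct_sub,
    dotProduct_smul, smul_eq_mul] at h
  linarith

lemma mulVec_eq_smul_of_posSemidef {x : n → ℝ} (ht : (t • 1 - A).PosSemidef)
    (hx : x ⬝ᵥ (A *ᵥ x) = t * (x ⬝ᵥ x)) : A *ᵥ x = t • x := by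
  have h0 : star x ⬝ᵥ ((t • 1 - A) *ᵥ x) = 0 := by
    simp only [star_trivial, sub_mulVec, smul_mulVec, one_mulVec, dotProduct_sub,
      dotProduct_smul, smul_eq_mul, hx, sub_self]
  have h1 := (ht.dotProduct_mulVec_zero_iff x).mp h0
  rw [sub_mulVec, smul_mulVec, one_mulVec, sub_eq_zero] at h1
  exact h1.symm

end Rayleigh

section Laplacian

variable {n : Type*} [Fintype n] [DecidableEq n] {W : Matrix n n ℝ}

lemma isHermitian_lap (hW : W.IsSymm) : (lap W).IsHermitian :=
  (isHermitian_diagonal _).sub (isHermitian_iff_isSymm.mpr hW)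

lemma lap_mulVec_apply (x : n → ℝ) (i : n) :
    (lap W *ᵥ x) i = deg W i * x i - ∑ j, W i j * x j := by
  rw [lap, sub_mulVec, Pi.sub_apply, mulVec_diagonal]
  rfl

lemma two_mul_dotProduct_lap_mulVec (hW : W.IsSymm) (x : n → ℝ) :
    2 * (x ⬝ᵥ (lap W *ᵥ x)) = ∑ i, ∑ j, W i j * (x i - x j) ^ 2 := by
  have hswap : ∑ i, ∑ j, W i j * x j ^ 2 = ∑ i, ∑ j, W i j * x i ^ 2 := by
    rw [Finset.sum_comm]
    simp_rw [hW.apply]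
  have hterm : ∀ i j, W i j * (x i - x j) ^ 2
      = W i j * x i ^ 2 + W i j * x j ^ 2 - 2 * (x i * (W i j * x j)) := fun i j => by ring
  have hquad : x ⬝ᵥ (lap W *ᵥ x) = ∑ i, ∑ j, (W i j * x i ^ 2 - x i * (W i j * x j)) := by
    simp only [dotProduct, lap_mulVec_apply, deg, mul_sub, Finset.sum_mul, Finset.mul_sum,
      Finset.sum_sub_distrib]
    congr 1
    exact Finset.sum_congr rfl fun i _ => Finset.sum_congr rfl fun j _ => by ring
  rw [hquad]
  simp only [hterm, Finset.sum_sub_distrib, Finset.sum_add_distrib, hswap, ← Finset.mul_sum]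
  ring

end Laplacian

lemma IsConn.induction_on {n : Type*} {W : Matrix n n ℝ} (hW : IsConn W) {P : n → Prop} {i : n}
    (hi : P i) (hP : ∀ a b, 0 < W a b → P a → P b) (j : n) : P j := by
  induction hW i j with
  | refl => exact hi
  | tail _ hab ih => exact hP _ _ hab ih

section Bipartite

variable {n : Type*} {V1 : Set n}

open Classical in
noncomputable def bipartiteSign (V1 : Set n) (i : n) : ℝ := if i ∈ V1 then 1 else -1

lemma bipartiteSign_mul_self (V1 : Set n) (i : n) :
    bipartiteSign V1 i * bipartiteSign V1 i = 1 := by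
  by_cases hi : i ∈ V1 <;> simp [bipartiteSign, hi]

lemma bipartiteSign_ne_zero (V1 : Set n) (i : n) : bipartiteSign V1 i ≠ 0 :=
  left_ne_zero_of_mul_eq_one (bipartiteSign_mul_self V1 i)

lemma IsBipartiteWith.bipartiteSign_eq_neg {W : Matrix n n ℝ} (hbip : IsBipartiteWith W V1)
    {i j : n} (hij : 0 < W i j) : bipartiteSign V1 j = -bipartiteSign V1 i := by
  by_cases hi : i ∈ V1
  · simp [bipartiteSign, hi, (hbip i j hij).mp hi]
  · have hj : j ∈ V1 := by
      by_contra hj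
      exact hi ((hbip i j hij).mpr hj)
    simp [bipartiteSign, hi, hj]

noncomputable def bipartiteAbs (V1 : Set n) (v : n → ℝ) (i : n) : ℝ :=
  bipartiteSign V1 i * |v i|

lemma dotProduct_bipartiteAbs_self [Fintype n] (V1 : Set n) (v : n → ℝ) :
    bipartiteAbs V1 v ⬝ᵥ bipartiteAbs V1 v = v ⬝ᵥ v := by
  refine Finset.sum_congr rfl fun i _ => ?_
  calc bipartiteAbs V1 v i * bipartiteAbs V1 v i
      = (bipartiteSign V1 i * bipartiteSign V1 i) * (|v i| * |v i|) := by
        simp only [bipartiteAbs]; ring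
    _ = v i * v i := by rw [bipartiteSign_mul_self, one_mul, abs_mul_abs_self]

lemma IsBipartiteWith.bipartiteAbs_sub_sq {W : Matrix n n ℝ} (hbip : IsBipartiteWith W V1)
    (v : n → ℝ) {i j : n} (hij : 0 < W i j) :
    (bipartiteAbs V1 v i - bipartiteAbs V1 v j) ^ 2 = (|v i| + |v j|) ^ 2 := by
  have h : bipartiteAbs V1 v i - bipartiteAbs V1 v j = bipartiteSign V1 i * (|v i| + |v j|) := by
    simp only [bipartiteAbs, hbip.bipartiteSign_eq_neg hij]; ring
  rw [h, mul_pow, sq (bipartiteSign V1 i), bipartiteSign_mul_self, one_mul]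

lemma IsBipartiteWith.mul_sub_sq_le_bipartiteAbs {W : Matrix n n ℝ} (hbip : IsBipartiteWith W V1)
    (hnonneg : ∀ i j, 0 ≤ W i j) (v : n → ℝ) (i j : n) :
    W i j * (v i - v j) ^ 2 ≤ W i j * (bipartiteAbs V1 v i - bipartiteAbs V1 v j) ^ 2 := by
  rcases (hnonneg i j).eq_or_lt with hij | hij
  · simp [← hij]
  · rw [hbip.bipartiteAbs_sub_sq v hij]
    refine mul_le_mul_of_nonneg_left ?_ hij.le
    rw [← sq_abs (v i - v j)]
    exact pow_le_pow_left₀ (abs_nonneg _) (abs_sub _ _) 2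

end Bipartite

section TopEigenvector

variable {n : Type*} [Fintype n] [DecidableEq n] {W : Matrix n n ℝ} {V1 : Set n} {t : ℝ}
  {v : n → ℝ}

lemma IsBipartiteWith.dotProduct_lap_mulVec_le_bipartiteAbs (hbip : IsBipartiteWith W V1)
    (hW : W.IsSymm) (hnonneg : ∀ i j, 0 ≤ W i j) (v : n → ℝ) :
    v ⬝ᵥ (lap W *ᵥ v) ≤ bipartiteAbs V1 v ⬝ᵥ (lap W *ᵥ bipartiteAbs V1 v) := by
  have h : 2 * (v ⬝ᵥ (lap W *ᵥ v))
      ≤ 2 * (bipartiteAbs V1 v ⬝ᵥ (lap W *ᵥ bipartiteAbs V1 v)) := by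
    rw [two_mul_dotProduct_lap_mulVec hW, two_mul_dotProduct_lap_mulVec hW]
    exact Finset.sum_le_sum fun i _ => Finset.sum_le_sum fun j _ =>
      hbip.mul_sub_sq_le_bipartiteAbs hnonneg v i j
  linarith

lemma IsBipartiteWith.eq_zero_of_adj (hbip : IsBipartiteWith W V1) (hnonneg : ∀ i j, 0 ≤ W i j)
    (hw : lap W *ᵥ bipartiteAbs V1 v = t • bipartiteAbs V1 v) {i j : n} (hi : v i = 0)
    (hij : 0 < W i j) : v j = 0 := by
  have hrow : ∑ k, W i k * bipartiteAbs V1 v k = 0 := by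
    have h := congrFun hw i
    simpa [lap_mulVec_apply, bipartiteAbs, hi] using h
  have hneigh : ∑ k, W i k * bipartiteAbs V1 v k
      = -bipartiteSign V1 i * ∑ k, W i k * |v k| := by
    rw [Finset.mul_sum]
    refine Finset.sum_congr rfl fun k _ => ?_
    rcases (hnonneg i k).eq_or_lt with hik | hik
    · simp [← hik]
    · simp only [bipartiteAbs, hbip.bipartiteSign_eq_neg hik]
      ring
  have habs : ∑ k, W i k * |v k| = 0 :=
    (mul_eq_zero.mp (hneigh ▸ hrow)).resolve_left (neg_ne_zero.mpr (bipartiteSign_ne_zero V1 i))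
  have hj := (Finset.sum_eq_zero_iff_of_nonneg fun k _ =>
    mul_nonneg (hnonneg i k) (abs_nonneg (v k))).mp habs j (Finset.mem_univ j)
  exact abs_eq_zero.mp ((mul_eq_zero.mp hj).resolve_left hij.ne')

variable (hbip : IsBipartiteWith W V1) (hW : W.IsSymm) (hnonneg : ∀ i j, 0 ≤ W i j)
  (ht : (t • 1 - lap W).PosSemidef) (heig : lap W *ᵥ v = t • v)
include hbip hW hnonneg ht heig

lemma IsBipartiteWith.dotProduct_lap_mulVec_bipartiteAbs :
    bipartiteAbs V1 v ⬝ᵥ (lap W *ᵥ bipartiteAbs V1 v) = v ⬝ᵥ (lap W *ᵥ v) := by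
  refine le_antisymm ?_ (hbip.dotProduct_lap_mulVec_le_bipartiteAbs hW hnonneg v)
  calc bipartiteAbs V1 v ⬝ᵥ (lap W *ᵥ bipartiteAbs V1 v)
      ≤ t * (bipartiteAbs V1 v ⬝ᵥ bipartiteAbs V1 v) :=
        dotProduct_mulVec_le_of_posSemidef ht _
    _ = v ⬝ᵥ (lap W *ᵥ v) := by
      rw [dotProduct_bipartiteAbs_self, heig, dotProduct_smul, smul_eq_mul]

lemma IsBipartiteWith.lap_mulVec_bipartiteAbs :
    lap W *ᵥ bipartiteAbs V1 v = t • bipartiteAbs V1 v := by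
  refine mulVec_eq_smul_of_posSemidef ht ?_
  rw [hbip.dotProduct_lap_mulVec_bipartiteAbs hW hnonneg ht heig, dotProduct_bipartiteAbs_self,
    heig, dotProduct_smul, smul_eq_mul]

lemma IsBipartiteWith.mul_eq_neg_abs_mul_abs {i j : n} (hij : 0 < W i j) :
    v i * v j = -(|v i| * |v j|) := by
  have hsum : ∑ p : n × n, W p.1 p.2 * (v p.1 - v p.2) ^ 2
      = ∑ p : n × n, W p.1 p.2 * (bipartiteAbs V1 v p.1 - bipartiteAbs V1 v p.2) ^ 2 := by
    simp only [Fintype.sum_prod_type]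
    rw [← two_mul_dotProduct_lap_mulVec hW, ← two_mul_dotProduct_lap_mulVec hW,
      hbip.dotProduct_lap_mulVec_bipartiteAbs hW hnonneg ht heig]
  have hterm := (Finset.sum_eq_sum_iff_of_le fun p _ =>
    hbip.mul_sub_sq_le_bipartiteAbs hnonneg v p.1 p.2).mp hsum (i, j) (Finset.mem_univ _)
  rw [hbip.bipartiteAbs_sub_sq v hij] at hterm
  have hsq := mul_left_cancel₀ hij.ne' hterm
  linear_combination (-1 / 2 : ℝ) * hsq - (1 / 2) * sq_abs (v i) - (1 / 2) * sq_abs (v j)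

end TopEigenvector

lemma IsConn.bipartiteSign_mul_pos_or_neg {n : Type*} {W : Matrix n n ℝ} {V1 : Set n}
    {v : n → ℝ} (hconn : IsConn W) (hbip : IsBipartiteWith W V1) (hv : ∀ i, v i ≠ 0)
    (hedge : ∀ i j, 0 < W i j → v i * v j < 0) :
    (∀ i, 0 < bipartiteSign V1 i * v i) ∨ (∀ i, bipartiteSign V1 i * v i < 0) := by
  set u : n → ℝ := fun i => bipartiteSign V1 i * v i with hu_def
  rcases isEmpty_or_nonempty n with hn | ⟨⟨i₀⟩⟩
  · exact Or.inl isEmptyElim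
  have hu : ∀ i, u i ≠ 0 := fun i => mul_ne_zero (bipartiteSign_ne_zero V1 i) (hv i)
  have hsame : ∀ j, 0 < u i₀ * u j := by
    refine hconn.induction_on (mul_self_pos.mpr (hu i₀)) fun a b hab ha => ?_
    have hab' : 0 < u a * u b := by
      have h : u a * u b = -(v a * v b) := by
        simp only [hu_def, hbip.bipartiteSign_eq_neg hab]
        linear_combination (-(v a * v b)) * bipartiteSign_mul_self V1 a
      exact h ▸ neg_pos.mpr (hedge a b hab)
    have h := mul_pos ha hab'
    rw [show u i₀ * u a * (u a * u b) = u a * u a * (u i₀ * u b) by ring] at h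
    exact pos_of_mul_pos_right h (mul_self_nonneg _)
  rcases (hu i₀).lt_or_gt with hneg | hpos
  · exact Or.inr fun j => neg_of_mul_pos_right (hsame j) hneg.le
  · exact Or.inl fun j => pos_of_mul_pos_right (hsame j) hpos.le

lemma polarity_of_bipartiteSign_mul {n : Type*} {V1 : Set n} {v : n → ℝ}
    (hu : (∀ i, 0 < bipartiteSign V1 i * v i) ∨ (∀ i, bipartiteSign V1 i * v i < 0)) :
    (∀ i j, ((i ∈ V1 ∧ j ∈ V1) ∨ (i ∉ V1 ∧ j ∉ V1)) → 0 < v i * v j) ∧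
    (∀ i j, ((i ∈ V1 ∧ j ∉ V1) ∨ (i ∉ V1 ∧ j ∈ V1)) → v i * v j < 0) ∧
    (∀ i, v i ≠ 0) ∧
    ({i | 0 ≤ v i} = V1 ∨ {i | 0 ≤ v i} = V1ᶜ) := by
  have hprod : ∀ i j, 0 < bipartiteSign V1 i * v i * (bipartiteSign V1 j * v j) := by
    rcases hu with h | h <;> intro i j
    · exact mul_pos (h i) (h j)
    · exact mul_pos_of_neg_of_neg (h i) (h j)
  refine ⟨?_, ?_, fun i hi => by simpa [hi] using hprod i i, ?_⟩
  · rintro i j (⟨hi, hj⟩ | ⟨hi, hj⟩) <;> simpa [bipartiteSign, hi, hj] using hprod i j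
  · rintro i j (⟨hi, hj⟩ | ⟨hi, hj⟩) <;> simpa [bipartiteSign, hi, hj] using hprod i j
  · rcases hu with h | h
    · refine Or.inl (Set.ext fun i => ?_)
      by_cases hi : i ∈ V1 <;> have := h i <;> simp [bipartiteSign, hi] at this ⊢ <;> linarith
    · refine Or.inr (Set.ext fun i => ?_)
      by_cases hi : i ∈ V1 <;> have := h i <;> simp [bipartiteSign, hi] at this ⊢ <;> linarith

/-- For a connected bipartite weighted graph with parts `V1` and `V1ᶜ`, any nonzero
eigenvector `v` of the Laplacian for the largest eigenvalue satisfies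
`v i * v j > 0` when `i, j` are on the same side of the bipartition and
`v i * v j < 0` when they are on opposite sides; in particular `v` has no zero
component and `{i : v i ≥ 0}` equals `V1` or `V1ᶜ`. -/
theorem largest_laplacian_eigenvector_polarity_of_bipartite
    {N : ℕ} (hN : 2 ≤ N) (W : Matrix (Fin N) (Fin N) ℝ)
    (hsymm : W.IsSymm) (hnonneg : ∀ i j, 0 ≤ W i j)
    (hconn : IsConn W) (V1 : Set (Fin N)) (hbip : IsBipartiteWith W V1)
    (v : Fin N → ℝ) (hv : v ≠ 0)
    (heig : lap W *ᵥ v =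
      sortedEigs (lap W) ⟨N - 1, by simp only [Fintype.card_fin]; omega⟩ • v) :
    (∀ i j, ((i ∈ V1 ∧ j ∈ V1) ∨ (i ∉ V1 ∧ j ∉ V1)) → 0 < v i * v j) ∧
    (∀ i j, ((i ∈ V1 ∧ j ∉ V1) ∨ (i ∉ V1 ∧ j ∈ V1)) → v i * v j < 0) ∧
    (∀ i, v i ≠ 0) ∧
    ({i | 0 ≤ v i} = V1 ∨ {i | 0 ≤ v i} = V1ᶜ) := by
  have hL := isHermitian_lap hsymm
  obtain ⟨t, ht, heig⟩ : ∃ t, (t • 1 - lap W).PosSemidef ∧ lap W *ᵥ v = t • v :=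
    ⟨_, hL.posSemidef_smul_one_sub <| hL.eigenvalues_le_sortedEigs fun l => by
      have := l.2
      simp only [Fintype.card_fin] at this
      exact Fin.le_def.mpr (by simp only; omega), heig⟩
  have hw := hbip.lap_mulVec_bipartiteAbs hsymm hnonneg ht heig
  have hnz : ∀ i, v i ≠ 0 := fun i hi => hv <| funext <|
    hconn.induction_on hi fun a b hab ha => hbip.eq_zero_of_adj hnonneg hw ha hab
  have hedge : ∀ i j, 0 < W i j → v i * v j < 0 := fun i j hij => by
    rw [hbip.mul_eq_neg_abs_mul_abs hsymm hnonneg ht heig hij]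
    exact neg_neg_of_pos (mul_pos (abs_pos.mpr (hnz i)) (abs_pos.mpr (hnz j)))
  exact polarity_of_bipartiteSign_mul (hconn.bipartiteSign_mul_pos_or_neg hbip hnz hedge)
end

section
/- Let L be the combinatorial graph Laplacian of a connected weighted graph on vertex set V, and let V_1 ⊊ V with V_1 and V_1^c nonempty. Then the Kron reduction K(L,V_1) is itself a loopless combinatorial graph Laplacian: it is symmetric, all of its off-diagonal entries are nonpositive, and each of its row sums equals zero (equivalently, K(L,V_1) = D^red − W^red where W^red_{ij} = −K(L,V_1)_{ij} for i ≠ j, W^red_{ii} = 0, and D^red is the corresponding degree matrix). -/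
open Matrix

theorem lapSub_minpr {N : ℕ} (W : Matrix (Fin N) (Fin N) ℝ)
    (hnonneg : ∀ i j, 0 ≤ W i j) (hdiag : ∀ i, W i i = 0)
    (hconn : IsConn W) (V1 : Finset (Fin N)) (h1 : V1.Nonempty)
    (x : ↥(V1ᶜ) → ℝ)
    (hx : ∀ i, 0 ≤ ((lap W).submatrix (Subtype.val : ↥(V1ᶜ) → Fin N)
      (Subtype.val : ↥(V1ᶜ) → Fin N) *ᵥ x) i) :
    ∀ i, 0 ≤ x i := by
  by_contra hcon
  push_neg at hcon
  obtain ⟨i₁, hi₁⟩ := hcon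
  obtain ⟨v₀, -, hv₀⟩ := Finset.exists_min_image Finset.univ x ⟨i₁, Finset.mem_univ _⟩
  set m := x v₀ with hm
  have hmin : ∀ k : ↥(V1ᶜ), m ≤ x k := fun k => hv₀ k (Finset.mem_univ k)
  have hmneg : m < 0 := lt_of_le_of_lt (hmin i₁) hi₁
  have step : ∀ v : ↥(V1ᶜ), x v = m → ∀ u : Fin N, 0 < W v.1 u →
      ∃ hu : u ∈ V1ᶜ, x ⟨u, hu⟩ = m := by
    intro v hxv u hu
    have hS := hx v
    have hexp : ((lap W).submatrix (Subtype.val : ↥(V1ᶜ) → Fin N)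
        (Subtype.val : ↥(V1ᶜ) → Fin N) *ᵥ x) v
        = deg W v.1 * x v - ∑ k : ↥(V1ᶜ), W v.1 k.1 * x k := by
      simp only [Matrix.mulVec, dotProduct, Matrix.submatrix_apply, lap,
        Matrix.sub_apply, sub_mul]
      rw [Finset.sum_sub_distrib]
      congr 1
      have : ∀ k : ↥(V1ᶜ), (Matrix.diagonal (deg W)) v.1 k.1 * x k
          = if v = k then deg W v.1 * x k else 0 := by
        intro k
        rcases eq_or_ne v k with h | h
        · simp [h]
        · rw [Matrix.diagonal_apply_ne _ (fun hh => h (Subtype.ext hh))]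
          simp [h]
      rw [Finset.sum_congr rfl (fun k _ => this k)]
      simp
    rw [hexp, hxv] at hS
    set c : ℝ := ∑ k : ↥(V1ᶜ), W v.1 k.1 with hc
    set c' : ℝ := ∑ j ∈ V1, W v.1 j with hc'
    have hdegsplit : deg W v.1 = c' + c := by
      rw [hc, hc', deg, Finset.sum_coe_sort]
      exact (Finset.sum_add_sum_compl V1 (fun j => W v.1 j)).symm
    have hcn : 0 ≤ c := Finset.sum_nonneg fun k _ => hnonneg _ _
    have hc'n : 0 ≤ c' := Finset.sum_nonneg fun k _ => hnonneg _ _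
    have hsum_ge : ∑ k : ↥(V1ᶜ), W v.1 k.1 * m ≤ ∑ k : ↥(V1ᶜ), W v.1 k.1 * x k :=
      Finset.sum_le_sum fun k _ => mul_le_mul_of_nonneg_left (hmin k) (hnonneg _ _)
    have hcm : ∑ k : ↥(V1ᶜ), W v.1 k.1 * m = c * m := by
      rw [hc, Finset.sum_mul]
    -- c' = 0
    have hc'0 : c' = 0 := by
      by_contra hne
      have hpos : 0 < c' := lt_of_le_of_ne hc'n (Ne.symm hne)
      nlinarith
    -- equality of the weighted sum
    have heq : ∑ k : ↥(V1ᶜ), W v.1 k.1 * x k = c * m := by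
      have h1' : ∑ k : ↥(V1ᶜ), W v.1 k.1 * x k ≤ c * m := by
        nlinarith
      linarith [hcm ▸ hsum_ge]
    -- each term zero
    have hterm : ∀ k : ↥(V1ᶜ), W v.1 k.1 * (x k - m) = 0 := by
      have hzero : ∑ k : ↥(V1ᶜ), W v.1 k.1 * (x k - m) = 0 := by
        simp only [mul_sub]
        rw [Finset.sum_sub_distrib, heq, hcm]
        ring
      have := (Finset.sum_eq_zero_iff_of_nonneg (fun k _ =>
        mul_nonneg (hnonneg _ _) (sub_nonneg.mpr (hmin k)))).mp hzero
      exact fun k => this k (Finset.mem_univ k)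
    -- u ∈ V1ᶜ
    have hv1w : ∀ j ∈ V1, W v.1 j = 0 := by
      intro j hj
      exact (Finset.sum_eq_zero_iff_of_nonneg (fun j _ => hnonneg _ _)).mp hc'0 j hj
    have huc : u ∈ V1ᶜ := by
      rw [Finset.mem_compl]
      intro hmem
      exact absurd (hv1w u hmem) (ne_of_gt hu)
    refine ⟨huc, ?_⟩
    have := hterm ⟨u, huc⟩
    rcases mul_eq_zero.mp this with h | h
    · exact absurd h (ne_of_gt hu)
    · linarith [sub_eq_zero.mp h]
  obtain ⟨w₁, hw₁⟩ := h1
  have hpath := hconn v₀.1 w₁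
  have hP : ∀ u : Fin N, Relation.ReflTransGen (fun a b => 0 < W a b) v₀.1 u →
      ∃ hu : u ∈ V1ᶜ, x ⟨u, hu⟩ = m := by
    intro u hu
    induction hu with
    | refl => exact ⟨v₀.2, rfl⟩
    | tail hab hbc ih =>
        obtain ⟨hb, hxb⟩ := ih
        exact step ⟨_, hb⟩ hxb _ hbc
  obtain ⟨hu, -⟩ := hP w₁ hpath
  exact (Finset.mem_compl.mp hu) hw₁

theorem lapSub_det_ne {N : ℕ} (W : Matrix (Fin N) (Fin N) ℝ)
    (hnonneg : ∀ i j, 0 ≤ W i j) (hdiag : ∀ i, W i i = 0)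
    (hconn : IsConn W) (V1 : Finset (Fin N)) (h1 : V1.Nonempty) :
    ((lap W).submatrix (Subtype.val : ↥(V1ᶜ) → Fin N)
      (Subtype.val : ↥(V1ᶜ) → Fin N)).det ≠ 0 := by
  intro h
  obtain ⟨v, hv, hv0⟩ := (Matrix.exists_mulVec_eq_zero_iff).mpr h
  have ha := lapSub_minpr W hnonneg hdiag hconn V1 h1 v (by simp [hv0])
  have hb := lapSub_minpr W hnonneg hdiag hconn V1 h1 (-v)
    (by intro i; rw [Matrix.mulVec_neg, hv0]; simp)
  exact hv (funext fun i => le_antisymm (by simpa using hb i) (ha i))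

theorem lapSub_inv_nonneg {N : ℕ} (W : Matrix (Fin N) (Fin N) ℝ)
    (hnonneg : ∀ i j, 0 ≤ W i j) (hdiag : ∀ i, W i i = 0)
    (hconn : IsConn W) (V1 : Finset (Fin N)) (h1 : V1.Nonempty) :
    ∀ i j, 0 ≤ (((lap W).submatrix (Subtype.val : ↥(V1ᶜ) → Fin N)
      (Subtype.val : ↥(V1ᶜ) → Fin N))⁻¹) i j := by
  intro i j
  set M := (lap W).submatrix (Subtype.val : ↥(V1ᶜ) → Fin N)
      (Subtype.val : ↥(V1ᶜ) → Fin N) with hM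
  have hdet := lapSub_det_ne W hnonneg hdiag hconn V1 h1
  have hMM : M * M⁻¹ = 1 := Matrix.mul_nonsing_inv _ (isUnit_iff_ne_zero.mpr hdet)
  have key : ∀ i, 0 ≤ (M *ᵥ (fun k => M⁻¹ k j)) i := by
    intro i
    have h2 : (M *ᵥ (fun k => M⁻¹ k j)) i = (M * M⁻¹) i j := by
      simp [Matrix.mulVec, dotProduct, Matrix.mul_apply]
    rw [h2, hMM, Matrix.one_apply]
    split <;> norm_num
  exact lapSub_minpr W hnonneg hdiag hconn V1 h1 (fun k => M⁻¹ k j) key i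

/-- The Kron reduction of the Laplacian of a connected weighted graph is itself a
loopless graph Laplacian: symmetric, nonpositive off-diagonal entries, zero row sums;
equivalently it equals `D_red - W_red` for the reduced weights. -/
theorem kron_reduction_is_laplacian
    {N : ℕ} (W : Matrix (Fin N) (Fin N) ℝ)
    (hsymm : W.IsSymm) (hnonneg : ∀ i j, 0 ≤ W i j) (hdiag : ∀ i, W i i = 0)
    (hconn : IsConn W) (V1 : Finset (Fin N)) (h1 : V1.Nonempty) (h2 : V1ᶜ.Nonempty) :
    (kron (lap W) V1).IsSymm ∧
    (∀ i j : ↥V1, i ≠ j → kron (lap W) V1 i j ≤ 0) ∧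
    (∀ i : ↥V1, ∑ j : ↥V1, kron (lap W) V1 i j = 0) ∧
    kron (lap W) V1 = lap (wred (kron (lap W) V1)) := by
  set L := lap W with hL
  have hLsymm : Lᵀ = L := by
    rw [hL]; unfold lap
    rw [Matrix.transpose_sub, Matrix.diagonal_transpose, hsymm]
  have hoff : ∀ i j : Fin N, i ≠ j → L i j = -W i j := by
    intro i j h
    rw [hL]; unfold lap
    rw [Matrix.sub_apply, Matrix.diagonal_apply_ne _ h]; ring
  have hrow : ∀ i, ∑ j, L i j = 0 := by
    intro i
    rw [hL]; unfold lap
    simp only [Matrix.sub_apply, Finset.sum_sub_distrib]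
    have : ∑ j, Matrix.diagonal (deg W) i j = deg W i := by
      simp [Matrix.diagonal_apply, Finset.sum_ite_eq]
    rw [this, deg]; ring
  set A := L.submatrix (Subtype.val : ↥V1 → Fin N) (Subtype.val : ↥V1 → Fin N) with hA
  set B := L.submatrix (Subtype.val : ↥V1 → Fin N) (Subtype.val : ↥(V1ᶜ) → Fin N) with hB
  set C := L.submatrix (Subtype.val : ↥(V1ᶜ) → Fin N) (Subtype.val : ↥V1 → Fin N) with hC
  set M := L.submatrix (Subtype.val : ↥(V1ᶜ) → Fin N) (Subtype.val : ↥(V1ᶜ) → Fin N) with hM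
  have hdet := lapSub_det_ne W hnonneg hdiag hconn V1 h1
  have hdetU : IsUnit M.det := isUnit_iff_ne_zero.mpr hdet
  have hKdef : kron L V1 = A - B * M⁻¹ * C := rfl
  have hinvnn := lapSub_inv_nonneg W hnonneg hdiag hconn V1 h1
  have hne : ∀ (i : ↥V1) (a : ↥(V1ᶜ)), (i : Fin N) ≠ (a : Fin N) := by
    intro i a h
    exact (Finset.mem_compl.mp a.2) (h ▸ i.2)
  -- row sums
  have hrowK : ∀ i : ↥V1, ∑ j : ↥V1, kron L V1 i j = 0 := by
    have hone : M *ᵥ (fun _ => (-1 : ℝ)) = C *ᵥ (fun _ => (1 : ℝ)) := by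
      funext b
      simp only [Matrix.mulVec, dotProduct, Matrix.submatrix_apply, mul_one,
        mul_neg, mul_one, hM, hC]
      have hb := hrow b.1
      rw [← Finset.sum_add_sum_compl V1 (fun j => L b.1 j)] at hb
      rw [Finset.sum_neg_distrib, Finset.sum_coe_sort (V1ᶜ) (fun j => L b.1 j),
        Finset.sum_coe_sort V1 (fun j => L b.1 j)]
      linarith
    have hinv1 : M⁻¹ *ᵥ (C *ᵥ (fun _ => (1 : ℝ))) = (fun _ => (-1 : ℝ)) := by
      rw [← hone, Matrix.mulVec_mulVec, Matrix.nonsing_inv_mul _ hdetU, Matrix.one_mulVec]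
    intro i
    have hKv : (kron L V1 *ᵥ (fun _ => (1 : ℝ))) i = ∑ j : ↥V1, kron L V1 i j := by
      simp [Matrix.mulVec, dotProduct]
    rw [← hKv, hKdef, Matrix.sub_mulVec, ← Matrix.mulVec_mulVec, ← Matrix.mulVec_mulVec,
      hinv1]
    have hBneg : B *ᵥ (fun _ => (-1 : ℝ)) = -(B *ᵥ (fun _ => (1 : ℝ))) := by
      funext b; simp [Matrix.mulVec, dotProduct]
    rw [hBneg]
    simp only [Pi.sub_apply, Pi.neg_apply, sub_neg_eq_add]
    have : (A *ᵥ (fun _ => (1:ℝ))) i + (B *ᵥ (fun _ => (1:ℝ))) i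
        = ∑ j ∈ V1, L i.1 j + ∑ j ∈ V1ᶜ, L i.1 j := by
      simp only [Matrix.mulVec, dotProduct, Matrix.submatrix_apply, mul_one, hA, hB]
      rw [Finset.sum_coe_sort V1 (fun j => L i.1 j), Finset.sum_coe_sort (V1ᶜ) (fun j => L i.1 j)]
    rw [this, Finset.sum_add_sum_compl, hrow]
  refine ⟨?_, ?_, hrowK, ?_⟩
  · -- symmetry
    unfold Matrix.IsSymm
    rw [hKdef, Matrix.transpose_sub, Matrix.transpose_mul, Matrix.transpose_mul]
    have hAt : Aᵀ = A := by rw [hA, Matrix.transpose_submatrix, hLsymm]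
    have hBt : Bᵀ = C := by rw [hB, hC, Matrix.transpose_submatrix, hLsymm]
    have hCt : Cᵀ = B := by rw [hB, hC, Matrix.transpose_submatrix, hLsymm]
    have hMt : (M⁻¹)ᵀ = M⁻¹ := by
      rw [Matrix.transpose_nonsing_inv]
      congr 1
      rw [hM, Matrix.transpose_submatrix, hLsymm]
    rw [hAt, hBt, hCt, hMt, Matrix.mul_assoc]
  · -- off-diagonal nonpositive
    intro i j hij
    rw [hKdef]
    have hAij : A i j ≤ 0 := by
      rw [hA, Matrix.submatrix_apply, hoff _ _ (fun h => hij (Subtype.ext h))]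
      linarith [hnonneg i.1 j.1]
    have hBMC : 0 ≤ (B * M⁻¹ * C) i j := by
      rw [Matrix.mul_apply]
      refine Finset.sum_nonneg fun b _ => ?_
      have hBM : (B * M⁻¹) i b ≤ 0 := by
        rw [Matrix.mul_apply]
        refine Finset.sum_nonpos fun a _ => ?_
        have hBa : B i a ≤ 0 := by
          rw [hB, Matrix.submatrix_apply, hoff _ _ (hne i a)]
          linarith [hnonneg i.1 a.1]
        exact mul_nonpos_of_nonpos_of_nonneg hBa (hinvnn a b)
      have hCb : C b j ≤ 0 := by
        rw [hC, Matrix.submatrix_apply, hoff _ _ (Ne.symm (hne j b))]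
        linarith [hnonneg b.1 j.1]
      exact mul_nonneg_of_nonpos_of_nonpos hBM hCb
    simp only [Matrix.sub_apply]
    linarith
  · -- lap wred identity
    ext i j
    rcases eq_or_ne i j with rfl | hij
    · unfold lap
      rw [Matrix.sub_apply, Matrix.diagonal_apply_eq]
      have hw0 : wred (kron L V1) i i = 0 := by simp [wred]
      rw [hw0, sub_zero, deg]
      have : ∀ j : ↥V1, wred (kron L V1) i j
          = -(kron L V1 i j) + (if i = j then kron L V1 i j else 0) := by
        intro j
        rcases eq_or_ne i j with rfl | h
        · simp [wred]
        · simp [wred, h]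
      rw [Finset.sum_congr rfl (fun j _ => this j), Finset.sum_add_distrib,
        Finset.sum_neg_distrib, hrowK i]
      simp
    · unfold lap
      rw [Matrix.sub_apply, Matrix.diagonal_apply_ne _ hij]
      simp [wred, hij]
end

section
/- Let L be the combinatorial graph Laplacian of a connected weighted graph on vertex set V with |V| = N, let V_1 ⊊ V with V_1 and V_1^c nonempty, and write the eigenvalues of L as 0 = λ_0(L) ≤ λ_1(L) ≤ … ≤ λ_{N−1}(L) and those of the Kron reduction K(L,V_1) as λ_0(K) ≤ … ≤ λ_{|V_1|−1}(K). Then for every ℓ ∈ {0, 1, …, |V_1|−1}: λ_ℓ(L) ≤ λ_ℓ(K) ≤ λ_{ℓ + N − |V_1|}(L). -/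
open Matrix

/-!
Write `L = lap W` in block form with respect to `V1 ⊔ V1ᶜ`. Connectedness makes the block `L₂₂`
positive definite, and `K = kron L V1` is the Schur complement of `L₂₂`. Both inequalities then
come from Courant–Fischer applied to a comparison of quadratic forms:
* the harmonic extension `ψ x` of `x : V1 → ℝ` satisfies `⟪ψ x, L ψ x⟫ = ⟪x, K x⟫` and
  `‖x‖ ≤ ‖ψ x‖`, so `ψ` maps the first `ℓ + 1` eigenvectors of `K` to a subspace on which the
  Rayleigh quotient of `L` is at most `λ_ℓ(K)`;
* `⟪x, K x⟫ ≤ ⟪x, L₁₁ x⟫`, and extension by zero maps the last `|V1| - ℓ` eigenvectors of `K`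
  isometrically to a subspace on which the Rayleigh quotient of `L` is at least `λ_ℓ(K)`.
-/

open Module

lemma Submodule.exists_mem_inf_ne_zero_of_finrank_lt {K V : Type*} [Field K] [AddCommGroup V]
    [Module K V] [FiniteDimensional K V] {U S : Submodule K V}
    (h : finrank K V < finrank K U + finrank K S) : ∃ x ∈ U ⊓ S, x ≠ 0 := by
  refine Submodule.exists_mem_ne_zero_of_ne_bot fun hbot => ?_
  have := Submodule.finrank_sup_add_finrank_inf_eq U S
  have := Submodule.finrank_le (U ⊔ S)
  rw [hbot, finrank_bot] at *
  omega

section DotProduct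

variable {m n : Type*} [Fintype m] [Fintype n]

lemma dotProduct_self_pos {x : n → ℝ} (hx : x ≠ 0) : 0 < x ⬝ᵥ x := by
  simpa using (dotProduct_star_self_pos_iff (v := x)).mpr hx

lemma dotProduct_self_nonneg (x : n → ℝ) : 0 ≤ x ⬝ᵥ x := by
  simpa using dotProduct_star_self_nonneg x

lemma LinearMap.injective_of_dotProduct_self_le (f : (m → ℝ) →ₗ[ℝ] n → ℝ)
    (hf : ∀ x, x ⬝ᵥ x ≤ f x ⬝ᵥ f x) : Function.Injective f := by
  refine (injective_iff_map_eq_zero f).mpr fun x hx => dotProduct_self_eq_zero.mp ?_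
  exact le_antisymm (by simpa [hx] using hf x) (dotProduct_self_nonneg x)

end DotProduct

section DotEigenbasis

variable {n : Type*} [Fintype n]

/-- Indexed by `Fin (card n)` so that it can carry the sorted eigenvalues; Mathlib's
`eigenvectorBasis` lives in `EuclideanSpace` and is indexed by `n`. -/
structure DotEigenbasis (M : Matrix n n ℝ) (μ : Fin (Fintype.card n) → ℝ) where
  vec : Fin (Fintype.card n) → n → ℝ
  dotProduct_vec : ∀ i j, vec i ⬝ᵥ vec j = if i = j then 1 else 0
  sum_dotProduct_smul : ∀ x, ∑ i, (vec i ⬝ᵥ x) • vec i = x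
  mulVec_vec : ∀ i, M *ᵥ vec i = μ i • vec i

namespace DotEigenbasis

variable {M : Matrix n n ℝ} {μ : Fin (Fintype.card n) → ℝ}

lemma dotProduct_eq_sum (e : DotEigenbasis M μ) (x y : n → ℝ) :
    x ⬝ᵥ y = ∑ i, (e.vec i ⬝ᵥ x) * (e.vec i ⬝ᵥ y) := by
  conv_lhs => rw [← e.sum_dotProduct_smul y]
  rw [dotProduct_sum]
  exact Finset.sum_congr rfl fun i _ => by
    rw [dotProduct_smul, smul_eq_mul, dotProduct_comm x, mul_comm]

lemma dotProduct_mulVec_eq_sum (e : DotEigenbasis M μ) (x : n → ℝ) :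
    x ⬝ᵥ (M *ᵥ x) = ∑ i, μ i * (e.vec i ⬝ᵥ x) ^ 2 := by
  have hMx : M *ᵥ x = ∑ i, (μ i * (e.vec i ⬝ᵥ x)) • e.vec i := by
    conv_lhs => rw [← e.sum_dotProduct_smul x]
    simp only [mulVec_sum, mulVec_smul, e.mulVec_vec, smul_smul, mul_comm]
  rw [hMx, dotProduct_sum]
  exact Finset.sum_congr rfl fun i _ => by rw [dotProduct_smul, dotProduct_comm, smul_eq_mul]; ring

lemma dotProduct_eq_zero_of_mem_span (e : DotEigenbasis M μ) {s : Finset (Fin (Fintype.card n))}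
    {x : n → ℝ} (hx : x ∈ Submodule.span ℝ (e.vec '' s)) {j : Fin (Fintype.card n)} (hj : j ∉ s) :
    e.vec j ⬝ᵥ x = 0 := by
  induction hx using Submodule.span_induction with
  | mem y hy =>
    obtain ⟨i, hi, rfl⟩ := hy
    rw [e.dotProduct_vec, if_neg (ne_of_mem_of_not_mem hi hj).symm]
  | zero => exact dotProduct_zero _
  | add y z _ _ hy hz => rw [dotProduct_add, hy, hz, add_zero]
  | smul a y _ hy => rw [dotProduct_smul, hy, smul_zero]

lemma linearIndependent (e : DotEigenbasis M μ) : LinearIndependent ℝ e.vec := by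
  refine Fintype.linearIndependent_iff.mpr fun g hg j => ?_
  simpa [dotProduct_sum, e.dotProduct_vec] using congrArg (e.vec j ⬝ᵥ ·) hg

lemma finrank_span_image (e : DotEigenbasis M μ) (s : Finset (Fin (Fintype.card n))) :
    finrank ℝ (Submodule.span ℝ (e.vec '' s)) = s.card := by
  have hli : LinearIndependent ℝ fun i : (s : Set (Fin (Fintype.card n))) => e.vec i :=
    e.linearIndependent.comp _ Subtype.val_injective
  rw [Set.image_eq_range, finrank_span_eq_card hli]
  simp

lemma dotProduct_mulVec_le_of_mem_span (e : DotEigenbasis M μ) {s : Finset (Fin (Fintype.card n))}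
    {t : ℝ} (hs : ∀ i ∈ s, μ i ≤ t) {x : n → ℝ} (hx : x ∈ Submodule.span ℝ (e.vec '' s)) :
    x ⬝ᵥ (M *ᵥ x) ≤ t * (x ⬝ᵥ x) := by
  rw [e.dotProduct_mulVec_eq_sum, e.dotProduct_eq_sum x x, Finset.mul_sum]
  refine Finset.sum_le_sum fun i _ => ?_
  by_cases hi : i ∈ s
  · nlinarith [hs i hi, sq_nonneg (e.vec i ⬝ᵥ x)]
  · simp [e.dotProduct_eq_zero_of_mem_span hx hi]

lemma le_dotProduct_mulVec_of_mem_span (e : DotEigenbasis M μ) {s : Finset (Fin (Fintype.card n))}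
    {t : ℝ} (hs : ∀ i ∈ s, t ≤ μ i) {x : n → ℝ} (hx : x ∈ Submodule.span ℝ (e.vec '' s)) :
    t * (x ⬝ᵥ x) ≤ x ⬝ᵥ (M *ᵥ x) := by
  rw [e.dotProduct_mulVec_eq_sum, e.dotProduct_eq_sum x x, Finset.mul_sum]
  refine Finset.sum_le_sum fun i _ => ?_
  by_cases hi : i ∈ s
  · nlinarith [hs i hi, sq_nonneg (e.vec i ⬝ᵥ x)]
  · simp [e.dotProduct_eq_zero_of_mem_span hx hi]

lemma eigenvalue_nonneg (e : DotEigenbasis M μ) (hM : ∀ x, 0 ≤ x ⬝ᵥ (M *ᵥ x))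
    (i : Fin (Fintype.card n)) :
    0 ≤ μ i := by
  simpa [e.mulVec_vec, e.dotProduct_vec] using hM (e.vec i)

/-- Courant–Fischer: by counting dimensions, `U` meets the span of the eigenvectors
`k, k + 1, …` nontrivially. -/
lemma le_of_forall_dotProduct_mulVec_le (e : DotEigenbasis M μ) (hμ : Monotone μ)
    (k : Fin (Fintype.card n)) {t : ℝ} (U : Submodule ℝ (n → ℝ)) (hU : k.val + 1 ≤ finrank ℝ U)
    (hUt : ∀ x ∈ U, x ⬝ᵥ (M *ᵥ x) ≤ t * (x ⬝ᵥ x)) : μ k ≤ t := by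
  set S := Submodule.span ℝ (e.vec '' Finset.Ici k)
  have hS : finrank ℝ S = Fintype.card n - k := by
    rw [e.finrank_span_image, Fin.card_Ici]
  obtain ⟨x, ⟨hxU, hxS⟩, hx⟩ := Submodule.exists_mem_inf_ne_zero_of_finrank_lt (U := U) (S := S)
    (by rw [hS, finrank_fintype_fun_eq_card]; omega)
  have hlow := e.le_dotProduct_mulVec_of_mem_span (fun i hi => hμ (Finset.mem_Ici.mp hi)) hxS
  exact le_of_mul_le_mul_right (hlow.trans (hUt x hxU)) (dotProduct_self_pos hx)

lemma ge_of_forall_le_dotProduct_mulVec (e : DotEigenbasis M μ) (hμ : Monotone μ)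
    (k : Fin (Fintype.card n)) {t : ℝ} (U : Submodule ℝ (n → ℝ))
    (hU : Fintype.card n - k.val ≤ finrank ℝ U)
    (hUt : ∀ x ∈ U, t * (x ⬝ᵥ x) ≤ x ⬝ᵥ (M *ᵥ x)) : t ≤ μ k := by
  set S := Submodule.span ℝ (e.vec '' Finset.Iic k)
  have hS : finrank ℝ S = k + 1 := by
    rw [e.finrank_span_image, Fin.card_Iic]
  obtain ⟨x, ⟨hxU, hxS⟩, hx⟩ := Submodule.exists_mem_inf_ne_zero_of_finrank_lt (U := U) (S := S)
    (by rw [hS, finrank_fintype_fun_eq_card]; omega)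
  have hup := e.dotProduct_mulVec_le_of_mem_span (fun i hi => hμ (Finset.mem_Iic.mp hi)) hxS
  exact le_of_mul_le_mul_right ((hUt x hxU).trans hup) (dotProduct_self_pos hx)

end DotEigenbasis
end DotEigenbasis

section SortedEigs

variable {n : Type*} [Fintype n] [DecidableEq n]

lemma Matrix.IsHermitian.sortedEigs_eq {A : Matrix n n ℝ} (hA : A.IsHermitian) :
    sortedEigs A = (fun i => hA.eigenvalues ((Fintype.equivFin n).symm i)) ∘
      ⇑(Tuple.sort fun i => hA.eigenvalues ((Fintype.equivFin n).symm i)) := by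
  rw [sortedEigs, dif_pos hA]

lemma Matrix.IsHermitian.sortedEigs_monotone {A : Matrix n n ℝ} (hA : A.IsHermitian) :
    Monotone (sortedEigs A) := by
  rw [hA.sortedEigs_eq]
  exact Tuple.monotone_sort _

noncomputable def Matrix.IsHermitian.dotEigenbasis {A : Matrix n n ℝ} (hA : A.IsHermitian) :
    DotEigenbasis A (sortedEigs A) :=
  let e := (Tuple.sort fun i => hA.eigenvalues ((Fintype.equivFin n).symm i)).trans
    (Fintype.equivFin n).symm
  let b := hA.eigenvectorBasis.reindex e.symm
  have hdot : ∀ u v : EuclideanSpace ℝ n, inner ℝ u v = u.ofLp ⬝ᵥ v.ofLp := fun u v => by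
    simp [PiLp.inner_apply, dotProduct, mul_comm]
  { vec := fun i => b i
    dotProduct_vec := fun i j => by rw [← hdot, orthonormal_iff_ite.mp b.orthonormal]
    sum_dotProduct_smul := fun x => by
      simpa only [hdot, WithLp.ofLp_toLp, WithLp.ofLp_sum, WithLp.ofLp_smul] using
        congrArg WithLp.ofLp (b.sum_repr' (WithLp.toLp 2 x))
    mulVec_vec := fun i => by
      rw [hA.sortedEigs_eq]
      simp only [b, OrthonormalBasis.reindex_apply, Equiv.symm_symm]
      exact hA.mulVec_eigenvectorBasis (e i) }

end SortedEigs

section Comparison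

variable {m n : Type*} [Fintype m] [DecidableEq m] [Fintype n] [DecidableEq n]

lemma sortedEigs_le_sortedEigs_of_map_le {A : Matrix m m ℝ} {B : Matrix n n ℝ}
    (hA : A.IsHermitian) (hB : B.IsHermitian) (hA₀ : ∀ x, 0 ≤ x ⬝ᵥ (A *ᵥ x))
    (f : (m → ℝ) →ₗ[ℝ] n → ℝ) (hf : ∀ x, x ⬝ᵥ x ≤ f x ⬝ᵥ f x)
    (hAB : ∀ x, f x ⬝ᵥ (B *ᵥ f x) ≤ x ⬝ᵥ (A *ᵥ x))
    (k : Fin (Fintype.card m)) (k' : Fin (Fintype.card n)) (hk : k'.val ≤ k.val) :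
    sortedEigs B k' ≤ sortedEigs A k := by
  have eA := hA.dotEigenbasis
  set U := Submodule.span ℝ (eA.vec '' Finset.Iic k)
  refine hB.dotEigenbasis.le_of_forall_dotProduct_mulVec_le hB.sortedEigs_monotone k'
    (U.map f) ?_ ?_
  · rw [← LinearEquiv.finrank_eq (U.equivMapOfInjective f (f.injective_of_dotProduct_self_le hf)),
      eA.finrank_span_image, Fin.card_Iic]
    omega
  · rintro _ ⟨x, hx, rfl⟩
    calc f x ⬝ᵥ (B *ᵥ f x) ≤ x ⬝ᵥ (A *ᵥ x) := hAB x
      _ ≤ sortedEigs A k * (x ⬝ᵥ x) := eA.dotProduct_mulVec_le_of_mem_span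
          (fun i hi => hA.sortedEigs_monotone (Finset.mem_Iic.mp hi)) hx
      _ ≤ sortedEigs A k * (f x ⬝ᵥ f x) :=
          mul_le_mul_of_nonneg_left (hf x) (eA.eigenvalue_nonneg hA₀ k)

lemma sortedEigs_le_sortedEigs_of_le_map {A : Matrix m m ℝ} {B : Matrix n n ℝ}
    (hA : A.IsHermitian) (hB : B.IsHermitian)
    (f : (m → ℝ) →ₗ[ℝ] n → ℝ) (hf : ∀ x, f x ⬝ᵥ f x = x ⬝ᵥ x)
    (hAB : ∀ x, x ⬝ᵥ (A *ᵥ x) ≤ f x ⬝ᵥ (B *ᵥ f x))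
    (k : Fin (Fintype.card m)) (k' : Fin (Fintype.card n))
    (hk : Fintype.card n - k'.val ≤ Fintype.card m - k.val) :
    sortedEigs A k ≤ sortedEigs B k' := by
  have eA := hA.dotEigenbasis
  set U := Submodule.span ℝ (eA.vec '' Finset.Ici k)
  refine hB.dotEigenbasis.ge_of_forall_le_dotProduct_mulVec hB.sortedEigs_monotone k'
    (U.map f) ?_ ?_
  · rw [← LinearEquiv.finrank_eq (U.equivMapOfInjective f
      (f.injective_of_dotProduct_self_le fun x => (hf x).ge)), eA.finrank_span_image, Fin.card_Ici]
    exact hk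
  · rintro _ ⟨x, hx, rfl⟩
    calc sortedEigs A k * (f x ⬝ᵥ f x) = sortedEigs A k * (x ⬝ᵥ x) := by rw [hf]
      _ ≤ x ⬝ᵥ (A *ᵥ x) := eA.le_dotProduct_mulVec_of_mem_span
          (fun i hi => hA.sortedEigs_monotone (Finset.mem_Ici.mp hi)) hx
      _ ≤ f x ⬝ᵥ (B *ᵥ f x) := hAB x

end Comparison

section ExtendByZero

open Function

variable {ι n : Type*} [Fintype ι] [Fintype n] {s : ι → n}

lemma extendByZero_dotProduct (hs : Injective s) (x : ι → ℝ) (w : n → ℝ) :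
    ExtendByZero.linearMap ℝ s x ⬝ᵥ w = ∑ a, x a * w (s a) := by
  refine (Fintype.sum_of_injective s hs _ _ (fun i hi => ?_) (fun a => ?_)).symm
  · simp [extend_apply' _ _ _ (by simpa using hi)]
  · simp [hs.extend_apply]

lemma extendByZero_dotProduct_extendByZero (hs : Injective s) (x y : ι → ℝ) :
    ExtendByZero.linearMap ℝ s x ⬝ᵥ ExtendByZero.linearMap ℝ s y = x ⬝ᵥ y := by
  rw [extendByZero_dotProduct hs]
  simp [hs.extend_apply, dotProduct]

lemma extendByZero_dotProduct_extendByZero_of_disjoint {κ : Type*} [Fintype κ] {t : κ → n}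
    (hs : Injective s) (hst : Disjoint (Set.range s) (Set.range t)) (x : ι → ℝ) (y : κ → ℝ) :
    ExtendByZero.linearMap ℝ s x ⬝ᵥ ExtendByZero.linearMap ℝ t y = 0 := by
  refine (extendByZero_dotProduct hs x _).trans (Finset.sum_eq_zero fun a _ => ?_)
  have ha : ¬∃ b, t b = s a := fun ⟨b, hb⟩ => hst.ne_of_mem ⟨a, rfl⟩ ⟨b, hb⟩ rfl
  simp [extend_apply' _ _ _ ha]

lemma extendByZero_dotProduct_mulVec_extendByZero {κ : Type*} [Fintype κ] {t : κ → n}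
    (hs : Injective s) (ht : Injective t) (M : Matrix n n ℝ) (x : ι → ℝ) (y : κ → ℝ) :
    ExtendByZero.linearMap ℝ s x ⬝ᵥ (M *ᵥ ExtendByZero.linearMap ℝ t y) =
      x ⬝ᵥ (M.submatrix s t *ᵥ y) := by
  rw [extendByZero_dotProduct hs]
  refine Finset.sum_congr rfl fun a _ => ?_
  rw [mulVec, dotProduct_comm, extendByZero_dotProduct ht]
  simp [mulVec, dotProduct, mul_comm]

end ExtendByZero

section Laplacian

variable {n : Type*} [Fintype n] [DecidableEq n] {W : Matrix n n ℝ}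

lemma lap_isSymm (hW : W.IsSymm) : (lap W).IsSymm := by
  rw [Matrix.IsSymm, lap, transpose_sub, diagonal_transpose, hW.eq]

lemma dotProduct_lap_mulVec (hW : W.IsSymm) (x : n → ℝ) :
    x ⬝ᵥ (lap W *ᵥ x) = (∑ i, ∑ j, W i j * (x i - x j) ^ 2) / 2 := by
  have hswap : ∑ i, ∑ j, W i j * x j ^ 2 = ∑ i, ∑ j, W i j * x i ^ 2 := by
    rw [Finset.sum_comm]
    simp only [hW.apply]
  have hexpand : ∑ i, ∑ j, W i j * (x i - x j) ^ 2 =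
      ∑ i, ∑ j, W i j * x i ^ 2 + ∑ i, ∑ j, W i j * x j ^ 2
        - 2 * ∑ i, ∑ j, x i * (W i j * x j) := by
    simp only [Finset.mul_sum, ← Finset.sum_add_distrib, ← Finset.sum_sub_distrib]
    exact Finset.sum_congr rfl fun i _ => Finset.sum_congr rfl fun j _ => by ring
  have hquad : x ⬝ᵥ (lap W *ᵥ x) =
      ∑ i, ∑ j, W i j * x i ^ 2 - ∑ i, ∑ j, x i * (W i j * x j) := by
    rw [lap, sub_mulVec, dotProduct_sub]
    simp only [dotProduct, mulVec_diagonal]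
    simp only [deg, mulVec, dotProduct, Finset.mul_sum, Finset.sum_mul]
    congr 1
    exact Finset.sum_congr rfl fun i _ => Finset.sum_congr rfl fun j _ => by ring
  rw [hquad, hexpand, hswap]
  ring

lemma dotProduct_lap_mulVec_nonneg (hW : W.IsSymm) (hW₀ : ∀ i j, 0 ≤ W i j) (x : n → ℝ) :
    0 ≤ x ⬝ᵥ (lap W *ᵥ x) := by
  rw [dotProduct_lap_mulVec hW]
  exact div_nonneg (Finset.sum_nonneg fun i _ => Finset.sum_nonneg fun j _ =>
    mul_nonneg (hW₀ i j) (sq_nonneg _)) zero_le_two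

lemma IsConn.eq_of_dotProduct_lap_mulVec_eq_zero (hconn : IsConn W) (hW : W.IsSymm)
    (hW₀ : ∀ i j, 0 ≤ W i j) {x : n → ℝ} (hx : x ⬝ᵥ (lap W *ᵥ x) = 0) (i j : n) :
    x i = x j := by
  have hterm : ∀ i j, W i j * (x i - x j) ^ 2 = 0 := by
    have hsum : ∑ i, ∑ j, W i j * (x i - x j) ^ 2 = 0 := by
      rw [dotProduct_lap_mulVec hW] at hx
      linarith
    intro i j
    have hnonneg : ∀ i j, 0 ≤ W i j * (x i - x j) ^ 2 := fun i j =>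
      mul_nonneg (hW₀ i j) (sq_nonneg _)
    rw [Finset.sum_eq_zero_iff_of_nonneg fun i _ => Finset.sum_nonneg fun j _ => hnonneg i j]
      at hsum
    exact (Finset.sum_eq_zero_iff_of_nonneg fun j _ => hnonneg i j).mp
      (hsum i (Finset.mem_univ i)) j (Finset.mem_univ j)
  induction hconn i j with
  | refl => rfl
  | @tail a b _ hab ih =>
    have := hterm a b
    rw [mul_eq_zero, or_iff_right hab.ne', sq_eq_zero_iff, sub_eq_zero] at this
    exact ih.trans this

lemma IsConn.posDef_submatrix_lap {ι : Type*} [Fintype ι] (hconn : IsConn W) (hW : W.IsSymm)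
    (hW₀ : ∀ i j, 0 ≤ W i j) {s : ι → n} (hs : Function.Injective s) {j : n}
    (hj : j ∉ Set.range s) : ((lap W).submatrix s s).PosDef := by
  refine .of_dotProduct_mulVec_pos ((isHermitian_iff_isSymm.mpr (lap_isSymm hW)).submatrix s)
    fun x hx => ?_
  rw [star_trivial, ← extendByZero_dotProduct_mulVec_extendByZero hs hs]
  refine (dotProduct_lap_mulVec_nonneg hW hW₀ _).lt_of_ne fun h0 => hx ?_
  have hconst := hconn.eq_of_dotProduct_lap_mulVec_eq_zero hW hW₀ h0.symm
  funext a
  simpa [hs.extend_apply, Function.extend_apply' _ _ _ (by simpa using hj)] using hconst (s a) j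

end Laplacian

section Kron

open Function

variable {n : Type*} [Fintype n] [DecidableEq n]

abbrev Matrix.subBlock {α : Type*} (M : Matrix n n α) (S T : Finset n) : Matrix S T α :=
  M.submatrix Subtype.val Subtype.val

variable {L : Matrix n n ℝ} (V1 : Finset n)

variable (L) in
lemma kron_eq_sub_subBlock : kron L V1 = L.subBlock V1 V1 -
    L.subBlock V1 V1ᶜ * (L.subBlock V1ᶜ V1ᶜ)⁻¹ * L.subBlock V1ᶜ V1 := rfl

lemma kron_isSymm (hL : L.IsSymm) : (kron L V1).IsSymm := by
  simp only [Matrix.IsSymm, kron, transpose_sub, transpose_mul, transpose_nonsing_inv,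
    transpose_submatrix, hL.eq, Matrix.mul_assoc]

variable (L) in
/-- The extension of `x` on `V1` to all of `n` that satisfies `L *ᵥ _ = 0` on `V1ᶜ`. -/
noncomputable def harmonicExt : (V1 → ℝ) →ₗ[ℝ] n → ℝ :=
  ExtendByZero.linearMap ℝ Subtype.val +
    (ExtendByZero.linearMap ℝ Subtype.val).comp
      (mulVecLin (-((L.subBlock V1ᶜ V1ᶜ)⁻¹ * L.subBlock V1ᶜ V1)))

lemma harmonicExt_apply (x : V1 → ℝ) :
    harmonicExt L V1 x = ExtendByZero.linearMap ℝ Subtype.val x +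
      ExtendByZero.linearMap ℝ Subtype.val (-((L.subBlock V1ᶜ V1ᶜ)⁻¹ * L.subBlock V1ᶜ V1) *ᵥ x) :=
  rfl

lemma disjoint_range_val_compl :
    Disjoint (Set.range (Subtype.val : V1 → n)) (Set.range (Subtype.val : ↥V1ᶜ → n)) := by
  refine Set.disjoint_left.mpr ?_
  rintro _ ⟨a, rfl⟩ ⟨b, hb⟩
  exact Finset.mem_compl.mp b.2 (hb ▸ a.2)

lemma dotProduct_self_le_harmonicExt (x : V1 → ℝ) :
    x ⬝ᵥ x ≤ harmonicExt L V1 x ⬝ᵥ harmonicExt L V1 x := by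
  rw [harmonicExt_apply]
  set y := -((L.subBlock V1ᶜ V1ᶜ)⁻¹ * L.subBlock V1ᶜ V1) *ᵥ x
  have hxy := extendByZero_dotProduct_extendByZero_of_disjoint Subtype.val_injective
    (disjoint_range_val_compl V1) x y
  have hyx : ExtendByZero.linearMap ℝ Subtype.val y ⬝ᵥ ExtendByZero.linearMap ℝ Subtype.val x =
      0 := by
    rw [dotProduct_comm, hxy]
  rw [dotProduct_add, add_dotProduct, add_dotProduct, hxy, hyx,
    extendByZero_dotProduct_extendByZero Subtype.val_injective,
    extendByZero_dotProduct_extendByZero Subtype.val_injective]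
  linarith [dotProduct_self_nonneg y]

lemma harmonicExt_dotProduct_mulVec (hL : IsUnit (L.subBlock V1ᶜ V1ᶜ).det) (x : V1 → ℝ) :
    harmonicExt L V1 x ⬝ᵥ (L *ᵥ harmonicExt L V1 x) = x ⬝ᵥ (kron L V1 *ᵥ x) := by
  rw [harmonicExt_apply]
  set y := -((L.subBlock V1ᶜ V1ᶜ)⁻¹ * L.subBlock V1ᶜ V1) *ᵥ x with hy
  have h₂₂ : L.subBlock V1ᶜ V1ᶜ *ᵥ y = -(L.subBlock V1ᶜ V1 *ᵥ x) := by
    rw [hy, mulVec_mulVec, Matrix.mul_neg, ← Matrix.mul_assoc, mul_nonsing_inv _ hL,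
      Matrix.one_mul, neg_mulVec]
  have h₁₂ : L.subBlock V1 V1ᶜ *ᵥ y =
      -((L.subBlock V1 V1ᶜ * (L.subBlock V1ᶜ V1ᶜ)⁻¹ * L.subBlock V1ᶜ V1) *ᵥ x) := by
    rw [hy, mulVec_mulVec, Matrix.mul_neg, neg_mulVec, Matrix.mul_assoc]
  simp only [mulVec_add, dotProduct_add, add_dotProduct,
    extendByZero_dotProduct_mulVec_extendByZero Subtype.val_injective Subtype.val_injective]
  rw [h₂₂, h₁₂, kron_eq_sub_subBlock, sub_mulVec, dotProduct_sub, dotProduct_neg, dotProduct_neg]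
  ring

lemma dotProduct_kron_mulVec_le (hL : L.IsSymm) (hL₂₂ : (L.subBlock V1ᶜ V1ᶜ).PosDef)
    (x : V1 → ℝ) : x ⬝ᵥ (kron L V1 *ᵥ x) ≤ x ⬝ᵥ (L.subBlock V1 V1 *ᵥ x) := by
  have hpsd := hL₂₂.inv.posSemidef.dotProduct_mulVec_nonneg (L.subBlock V1ᶜ V1 *ᵥ x)
  have hBAC : x ⬝ᵥ ((L.subBlock V1 V1ᶜ * (L.subBlock V1ᶜ V1ᶜ)⁻¹ * L.subBlock V1ᶜ V1) *ᵥ x) =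
      (L.subBlock V1ᶜ V1 *ᵥ x) ⬝ᵥ ((L.subBlock V1ᶜ V1ᶜ)⁻¹ *ᵥ (L.subBlock V1ᶜ V1 *ᵥ x)) := by
    have htranspose : (L.subBlock V1ᶜ V1)ᵀ = L.subBlock V1 V1ᶜ := by
      rw [transpose_submatrix, hL.eq]
    rw [← mulVec_mulVec, ← mulVec_mulVec, dotProduct_mulVec, ← htranspose, vecMul_transpose]
  rw [kron_eq_sub_subBlock, sub_mulVec, dotProduct_sub, hBAC]
  simp only [star_trivial] at hpsd
  linarith

end Kron

/-- Spectral interlacing for Kron reduction: for every `ℓ`,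
`λ_ℓ(L) ≤ λ_ℓ(K(L,V1)) ≤ λ_{ℓ + N - |V1|}(L)`. -/
theorem kron_reduction_eigenvalue_interlacing
    {N : ℕ} (W : Matrix (Fin N) (Fin N) ℝ)
    (hsymm : W.IsSymm) (hnonneg : ∀ i j, 0 ≤ W i j)
    (hconn : IsConn W) (V1 : Finset (Fin N)) (h1 : V1.Nonempty) :
    ∀ ℓ : Fin (Fintype.card ↥V1),
      sortedEigs (lap W) ⟨ℓ.1, by
          have h := ℓ.2
          simp only [Fintype.card_coe] at h
          simp only [Fintype.card_fin]
          have hle : V1.card ≤ N := by simpa using V1.card_le_univ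
          omega⟩ ≤ sortedEigs (kron (lap W) V1) ℓ ∧
      sortedEigs (kron (lap W) V1) ℓ ≤
        sortedEigs (lap W) ⟨ℓ.1 + N - V1.card, by
          have h := ℓ.2
          simp only [Fintype.card_coe] at h
          simp only [Fintype.card_fin]
          have hle : V1.card ≤ N := by simpa using V1.card_le_univ
          omega⟩ := by
  intro ℓ
  obtain ⟨i, hi⟩ := h1
  have hL := lap_isSymm hsymm
  have hL₂₂ : ((lap W).subBlock V1ᶜ V1ᶜ).PosDef :=
    hconn.posDef_submatrix_lap hsymm hnonneg Subtype.val_injective (j := i) (by simpa using hi)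
  have hLh : (lap W).IsHermitian := isHermitian_iff_isSymm.mpr hL
  have hKh : (kron (lap W) V1).IsHermitian := isHermitian_iff_isSymm.mpr (kron_isSymm V1 hL)
  have hK : ∀ x, harmonicExt (lap W) V1 x ⬝ᵥ (lap W *ᵥ harmonicExt (lap W) V1 x) =
      x ⬝ᵥ (kron (lap W) V1 *ᵥ x) :=
    harmonicExt_dotProduct_mulVec V1 hL₂₂.det_pos.ne'.isUnit
  constructor
  · refine sortedEigs_le_sortedEigs_of_map_le hKh hLh
      (fun x => hK x ▸ dotProduct_lap_mulVec_nonneg hsymm hnonneg _) _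
      (dotProduct_self_le_harmonicExt V1) (fun x => (hK x).le) ℓ _ le_rfl
  · refine sortedEigs_le_sortedEigs_of_le_map hKh hLh (Function.ExtendByZero.linearMap ℝ _)
      (fun x => extendByZero_dotProduct_extendByZero Subtype.val_injective x x)
      (fun x => ?_) ℓ _ ?_
    · rw [extendByZero_dotProduct_mulVec_extendByZero Subtype.val_injective Subtype.val_injective]
      exact dotProduct_kron_mulVec_le V1 hL hL₂₂ x
    · have := V1.card_le_univ
      simp only [Fintype.card_fin, Fintype.card_coe] at this ⊢
      omega
end

section
/- Let L be the combinatorial graph Laplacian of a connected weighted graph on vertex set V with weight matrix W, let V_1 ⊊ V with V_1 and V_1^c nonempty, and let W^red be the reduced weights of the Kron reduction K(L,V_1). Then the edge weights increase monotonically: for all distinct i, j ∈ V_1, W^red_{ij} ≥ W_{ij}. -/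
open Matrix

lemma min_principle {N : ℕ} (W : Matrix (Fin N) (Fin N) ℝ)
    (hnonneg : ∀ i j, 0 ≤ W i j) (hconn : IsConn W)
    (V1 : Finset (Fin N)) (h1 : V1.Nonempty)
    (x : Fin N → ℝ)
    (hx : ∀ j ∈ V1ᶜ, 0 ≤ ∑ l ∈ V1ᶜ, lap W j l * x l) :
    ∀ v ∈ V1ᶜ, 0 ≤ x v := by
  by_contra hcon
  push_neg at hcon
  obtain ⟨v0, hv0, hv0neg⟩ := hcon
  obtain ⟨k, hk, hkmin⟩ := Finset.exists_min_image V1ᶜ x ⟨v0, hv0⟩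
  set m := x k with hm
  have hmneg : m < 0 := lt_of_le_of_lt (hkmin v0 hv0) hv0neg
  have key : ∀ v, v ∈ V1ᶜ → x v = m → ∀ u, 0 < W v u → u ∈ V1ᶜ ∧ x u = m := by
    intro v hv hxv u hWu
    have h0 := hx v hv
    have hexpand : ∑ l ∈ V1ᶜ, lap W v l * x l
        = (∑ l ∈ V1ᶜ, W v l * (m - x l)) + (∑ u ∈ V1, W v u) * m := by
      have h1' : ∑ l ∈ V1ᶜ, lap W v l * x l
          = (∑ l ∈ V1ᶜ, Matrix.diagonal (deg W) v l * x l) - ∑ l ∈ V1ᶜ, W v l * x l := by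
        rw [← Finset.sum_sub_distrib]
        apply Finset.sum_congr rfl
        intro l _
        simp [lap, Matrix.sub_apply, sub_mul]
      have h2' : ∑ l ∈ V1ᶜ, Matrix.diagonal (deg W) v l * x l = deg W v * m := by
        rw [Finset.sum_eq_single v]
        · simp [hxv]
        · intro b _ hbv
          simp [Matrix.diagonal_apply_ne' _ hbv]
        · intro hv'; exact absurd hv hv'
      have h3' : deg W v = (∑ u ∈ V1, W v u) + ∑ u ∈ V1ᶜ, W v u := by
        rw [Finset.sum_add_sum_compl]; rfl
      rw [h1', h2', h3']
      have e1 : ∑ l ∈ V1ᶜ, W v l * (m - x l)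
          = (∑ l ∈ V1ᶜ, W v l) * m - ∑ l ∈ V1ᶜ, W v l * x l := by
        rw [Finset.sum_mul, ← Finset.sum_sub_distrib]
        exact Finset.sum_congr rfl fun l _ => by ring
      rw [e1]; ring
    rw [hexpand] at h0
    have hS1 : ∀ l ∈ V1ᶜ, W v l * (m - x l) ≤ 0 := by
      intro l hl
      exact mul_nonpos_of_nonneg_of_nonpos (hnonneg v l) (by linarith [hkmin l hl])
    have hS1' : ∑ l ∈ V1ᶜ, W v l * (m - x l) ≤ 0 :=
      Finset.sum_nonpos hS1
    have hS2 : (∑ u ∈ V1, W v u) * m ≤ 0 :=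
      mul_nonpos_of_nonneg_of_nonpos (Finset.sum_nonneg fun u _ => hnonneg v u) hmneg.le
    have hsum0 : ∑ l ∈ V1ᶜ, W v l * (m - x l) = 0 := by linarith
    have hV1sum0 : (∑ u ∈ V1, W v u) = 0 := by
      have : (∑ u ∈ V1, W v u) * m = 0 := by linarith
      rcases mul_eq_zero.mp this with h | h
      · exact h
      · exact absurd h hmneg.ne
    have huV1 : u ∉ V1 := by
      intro huV1
      have : W v u = 0 :=
        (Finset.sum_eq_zero_iff_of_nonneg fun u _ => hnonneg v u).mp hV1sum0 u huV1
      linarith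
    have huc : u ∈ V1ᶜ := Finset.mem_compl.mpr huV1
    have hterm : W v u * (m - x u) = 0 :=
      (Finset.sum_eq_zero_iff_of_nonpos hS1).mp hsum0 u huc
    rcases mul_eq_zero.mp hterm with h | h
    · exact absurd h hWu.ne'
    · exact ⟨huc, by linarith⟩
  have hall : ∀ w', Relation.ReflTransGen (fun a b => 0 < W a b) k w' →
      w' ∈ V1ᶜ ∧ x w' = m := by
    intro w' hp
    induction hp with
    | refl => exact ⟨hk, rfl⟩
    | tail hab hbc ih => exact key _ ih.1 ih.2 _ hbc
  obtain ⟨w, hw⟩ := h1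
  exact (Finset.mem_compl.mp (hall w (hconn k w)).1) hw

lemma inv_entries_nonneg {N : ℕ} (W : Matrix (Fin N) (Fin N) ℝ)
    (hnonneg : ∀ i j, 0 ≤ W i j) (hconn : IsConn W)
    (V1 : Finset (Fin N)) (h1 : V1.Nonempty) (a b : ↥(V1ᶜ)) :
    0 ≤ ((lap W).submatrix (Subtype.val : ↥(V1ᶜ) → Fin N)
        (Subtype.val : ↥(V1ᶜ) → Fin N))⁻¹ a b := by
  set A := (lap W).submatrix (Subtype.val : ↥(V1ᶜ) → Fin N)
      (Subtype.val : ↥(V1ᶜ) → Fin N) with hA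
  by_cases hdet : IsUnit A.det
  · set x : Fin N → ℝ := fun v => if h : v ∈ V1ᶜ then A⁻¹ ⟨v, h⟩ b else 0 with hxdef
    have hx : ∀ j ∈ V1ᶜ, 0 ≤ ∑ l ∈ V1ᶜ, lap W j l * x l := by
      intro j hj
      have hsum : ∑ l ∈ V1ᶜ, lap W j l * x l = (A * A⁻¹) ⟨j, hj⟩ b := by
        rw [Matrix.mul_apply, ← Finset.sum_coe_sort V1ᶜ]
        apply Finset.sum_congr rfl
        intro l _
        have hxl : x l.1 = A⁻¹ l b := by simp only [hxdef]; exact dif_pos l.2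
        rw [hxl, hA, Matrix.submatrix_apply]
      rw [hsum, Matrix.mul_nonsing_inv _ hdet, Matrix.one_apply]
      split <;> norm_num
    have h := min_principle W hnonneg hconn V1 h1 x hx a.1 a.2
    have hxa : x a.1 = A⁻¹ a b := by simp only [hxdef]; exact dif_pos a.2
    rwa [hxa] at h
  · rw [Matrix.nonsing_inv_apply_not_isUnit _ hdet]
    simp

lemma lap_offdiag {N : ℕ} (W : Matrix (Fin N) (Fin N) ℝ) {u v : Fin N} (h : u ≠ v) :
    lap W u v = -W u v := by
  simp [lap, Matrix.sub_apply, Matrix.diagonal_apply_ne _ h]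

/-- Monotonic increase of weights under Kron reduction: for all distinct kept vertices
`i, j ∈ V1`, `W_red i j ≥ W i j`. -/
theorem kron_reduction_weights_increase
    {N : ℕ} (W : Matrix (Fin N) (Fin N) ℝ)
    (hsymm : W.IsSymm) (hnonneg : ∀ i j, 0 ≤ W i j) (hdiag : ∀ i, W i i = 0)
    (hconn : IsConn W) (V1 : Finset (Fin N)) (h1 : V1.Nonempty) (h2 : V1ᶜ.Nonempty) :
    ∀ i j : ↥V1, i ≠ j → W i.1 j.1 ≤ wred (kron (lap W) V1) i j := by
  intro i j hij
  have hij' : (i : Fin N) ≠ (j : Fin N) := fun h => hij (Subtype.ext h)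
  set L := lap W with hL
  set A := L.submatrix (Subtype.val : ↥(V1ᶜ) → Fin N) (Subtype.val : ↥(V1ᶜ) → Fin N)
    with hA
  set P := L.submatrix (Subtype.val : ↥V1 → Fin N) (Subtype.val : ↥(V1ᶜ) → Fin N) *
      A⁻¹ * L.submatrix (Subtype.val : ↥(V1ᶜ) → Fin N) (Subtype.val : ↥V1 → Fin N)
    with hP
  have hw : wred (kron L V1) i j = W i.1 j.1 + P i j := by
    show (if i = j then 0 else -(kron L V1 i j)) = _
    rw [if_neg hij]
    have : kron L V1 i j = L i.1 j.1 - P i j := rfl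
    rw [this, hL, lap_offdiag W hij']
    ring
  rw [hw]
  have hPnn : 0 ≤ P i j := by
    rw [hP, Matrix.mul_apply]
    apply Finset.sum_nonneg
    intro b _
    rw [Matrix.mul_apply]
    have hbj : (b : Fin N) ≠ (j : Fin N) := by
      intro h; exact (Finset.mem_compl.mp b.2) (h ▸ j.2)
    have hL21 : L.submatrix (Subtype.val : ↥(V1ᶜ) → Fin N) (Subtype.val : ↥V1 → Fin N) b j
        = -W b.1 j.1 := by
      rw [Matrix.submatrix_apply]; exact lap_offdiag W hbj
    have hsum : ∑ a : ↥(V1ᶜ),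
        L.submatrix (Subtype.val : ↥V1 → Fin N) (Subtype.val : ↥(V1ᶜ) → Fin N) i a * A⁻¹ a b
        = -∑ a : ↥(V1ᶜ), W i.1 a.1 * A⁻¹ a b := by
      rw [← Finset.sum_neg_distrib]
      apply Finset.sum_congr rfl
      intro a _
      have hia : (i : Fin N) ≠ (a : Fin N) := by
        intro h; exact (Finset.mem_compl.mp a.2) (h ▸ i.2)
      rw [Matrix.submatrix_apply, hL, lap_offdiag W hia]
      ring
    rw [hsum, hL21]
    have h1' : 0 ≤ ∑ a : ↥(V1ᶜ), W i.1 a.1 * A⁻¹ a b :=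
      Finset.sum_nonneg fun a _ =>
        mul_nonneg (hnonneg _ _) (inv_entries_nonneg W hnonneg hconn V1 h1 a b)
    have := mul_nonneg h1' (hnonneg b.1 j.1)
    nlinarith [this]
  linarith
end

section
/- Let P_N be the path graph on vertices {1,…,N}, N ≥ 3, with unit weights W_{i,i+1} = W_{i+1,i} = 1 for 1 ≤ i ≤ N−1 and all other weights zero, and let V_1 = {1, 3, 5, …} be the set of odd-indexed vertices. Then the Kron reduction K(L,V_1) of the Laplacian of P_N is the graph Laplacian of the path graph on the ⌈N/2⌉ vertices of V_1 in which every consecutive pair of kept vertices is joined by an edge of weight 1/2 (and there are no other edges). -/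
open Matrix

section auxkron

variable {N : ℕ}

private lemma sum_ite_val' (k : ℕ) (f : Fin N → ℝ) :
    (∑ j : Fin N, if j.1 = k then f j else 0) = if h : k < N then f ⟨k, h⟩ else 0 := by
  split_ifs with h
  · rw [show (∑ j : Fin N, if j.1 = k then f j else 0)
        = ∑ j : Fin N, if j = ⟨k, h⟩ then f j else 0 from
      Finset.sum_congr rfl fun j _ => by
        rcases eq_or_ne j ⟨k, h⟩ with hj | hj
        · subst hj; simp
        · rw [if_neg hj, if_neg (by simpa [Fin.ext_iff] using hj)]]
    rw [Finset.sum_ite_eq' Finset.univ (⟨k, h⟩ : Fin N) f]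
    simp
  · refine Finset.sum_eq_zero fun j _ => ?_
    rw [if_neg (by omega)]

private lemma sum_coe_fin (s : Finset (Fin N)) (f : Fin N → ℝ) :
    (∑ c : ↥s, f c.1) = ∑ j : Fin N, if j ∈ s then f j else 0 := by
  rw [Finset.sum_coe_sort]
  rw [Finset.sum_ite_mem, Finset.univ_inter]

private def Wpath (N : ℕ) : Matrix (Fin N) (Fin N) ℝ :=
  Matrix.of fun i j => if i.1 + 1 = j.1 ∨ j.1 + 1 = i.1 then (1 : ℝ) else 0

private lemma deg_Wpath (i : Fin N) :
    deg (Wpath N) i = (if i.1 + 1 < N then 1 else 0) + (if 0 < i.1 then 1 else 0) := by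
  unfold deg
  have h1 : ∀ j : Fin N, Wpath N i j
      = (if j.1 = i.1 + 1 then (1 : ℝ) else 0)
        + (if 0 < i.1 ∧ j.1 = i.1 - 1 then 1 else 0) := by
    intro j
    unfold Wpath
    simp only [Matrix.of_apply]
    split_ifs <;> first | (exfalso; omega) | norm_num
  simp_rw [h1]
  rw [Finset.sum_add_distrib, sum_ite_val']
  by_cases hi : 0 < i.1
  · have h2 : ∀ j : Fin N, (if 0 < i.1 ∧ j.1 = i.1 - 1 then (1 : ℝ) else 0)
        = if j.1 = i.1 - 1 then 1 else 0 := fun j => by simp [hi]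
    simp_rw [h2]
    rw [sum_ite_val', dif_pos (show i.1 - 1 < N by omega), if_pos hi]
    split_ifs <;> norm_num
  · have h2 : ∀ j : Fin N, (if 0 < i.1 ∧ j.1 = i.1 - 1 then (1 : ℝ) else 0) = 0 :=
      fun j => by simp [hi]
    simp_rw [h2]
    rw [if_neg hi, Finset.sum_const_zero]
    split_ifs <;> norm_num

private def V1 (N : ℕ) : Finset (Fin N) := Finset.univ.filter fun i => i.1 % 2 = 0

private lemma mem_V1 (i : Fin N) : i ∈ V1 N ↔ i.1 % 2 = 0 := by simp [V1]

private lemma mem_V1c (i : Fin N) : i ∈ (V1 N)ᶜ ↔ i.1 % 2 = 1 := by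
  simp [V1]

private lemma deg_Wpath_odd (c : Fin N) (hc : c.1 % 2 = 1) :
    deg (Wpath N) c = if c.1 + 1 < N then 2 else 1 := by
  rw [deg_Wpath, if_pos (show 0 < c.1 by omega)]
  split_ifs <;> norm_num

private lemma lap_Wpath_ne {i j : Fin N} (h : i.1 ≠ j.1) :
    lap (Wpath N) i j = -(if i.1 + 1 = j.1 ∨ j.1 + 1 = i.1 then (1 : ℝ) else 0) := by
  unfold lap
  rw [Matrix.sub_apply, Matrix.diagonal_apply_ne _ (by simpa [Fin.ext_iff] using h)]
  unfold Wpath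
  simp

private lemma lap_Wpath_diag (i : Fin N) : lap (Wpath N) i i = deg (Wpath N) i := by
  unfold lap
  rw [Matrix.sub_apply, Matrix.diagonal_apply_eq]
  have : Wpath N i i = 0 := by
    unfold Wpath; simp only [Matrix.of_apply]; rw [if_neg (by omega)]
  rw [this, sub_zero]

private lemma subc_diag :
    (lap (Wpath N)).submatrix (Subtype.val : ↥((V1 N)ᶜ) → Fin N)
        (Subtype.val : ↥((V1 N)ᶜ) → Fin N)
      = Matrix.diagonal (fun c : ↥((V1 N)ᶜ) => deg (Wpath N) c.1) := by
  ext c d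
  have hc : c.1.1 % 2 = 1 := (mem_V1c _).1 c.2
  have hd : d.1.1 % 2 = 1 := (mem_V1c _).1 d.2
  rcases eq_or_ne c d with h | h
  · subst h
    rw [Matrix.diagonal_apply_eq, Matrix.submatrix_apply, lap_Wpath_diag]
  · have hcd : c.1.1 ≠ d.1.1 := by
      intro h'
      exact h (Subtype.ext (Fin.ext h'))
    rw [Matrix.diagonal_apply_ne _ h, Matrix.submatrix_apply, lap_Wpath_ne hcd,
      if_neg (by omega), neg_zero]

private lemma subc_inv :
    ((lap (Wpath N)).submatrix (Subtype.val : ↥((V1 N)ᶜ) → Fin N)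
        (Subtype.val : ↥((V1 N)ᶜ) → Fin N))⁻¹
      = Matrix.diagonal (fun c : ↥((V1 N)ᶜ) => (deg (Wpath N) c.1)⁻¹) := by
  rw [subc_diag]
  apply Matrix.inv_eq_right_inv
  rw [Matrix.diagonal_mul_diagonal]
  have h1 : ∀ c : ↥((V1 N)ᶜ), deg (Wpath N) c.1 * (deg (Wpath N) c.1)⁻¹ = 1 := by
    intro c
    have hc : c.1.1 % 2 = 1 := (mem_V1c _).1 c.2
    have : deg (Wpath N) c.1 ≠ 0 := by
      rw [deg_Wpath_odd _ hc]
      split_ifs <;> norm_num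
    exact mul_inv_cancel₀ this
  simp_rw [h1]
  rfl

private lemma kron_apply (a b : ↥(V1 N)) :
    kron (lap (Wpath N)) (V1 N) a b
      = lap (Wpath N) a.1 b.1
        - ∑ c : ↥((V1 N)ᶜ),
            lap (Wpath N) a.1 c.1 * (deg (Wpath N) c.1)⁻¹ * lap (Wpath N) c.1 b.1 := by
  unfold kron
  rw [subc_inv, Matrix.sub_apply, Matrix.submatrix_apply, Matrix.mul_apply]
  congr 1
  refine Finset.sum_congr rfl fun c _ => ?_
  rw [Matrix.mul_diagonal, Matrix.submatrix_apply, Matrix.submatrix_apply]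

private lemma S_eq (a b : ↥(V1 N)) :
    (∑ c : ↥((V1 N)ᶜ),
        lap (Wpath N) a.1 c.1 * (deg (Wpath N) c.1)⁻¹ * lap (Wpath N) c.1 b.1)
      = ∑ j : Fin N,
          if j.1 % 2 = 1 ∧ (a.1.1 + 1 = j.1 ∨ j.1 + 1 = a.1.1)
              ∧ (j.1 + 1 = b.1.1 ∨ b.1.1 + 1 = j.1) then
            (deg (Wpath N) j)⁻¹ else 0 := by
  have ha : a.1.1 % 2 = 0 := (mem_V1 _).1 a.2
  have hb : b.1.1 % 2 = 0 := (mem_V1 _).1 b.2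
  rw [sum_coe_fin ((V1 N)ᶜ)
    (fun j => lap (Wpath N) a.1 j * (deg (Wpath N) j)⁻¹ * lap (Wpath N) j b.1)]
  refine Finset.sum_congr rfl fun j _ => ?_
  by_cases hj : j ∈ (V1 N)ᶜ
  · have hj' : j.1 % 2 = 1 := (mem_V1c j).1 hj
    rw [if_pos hj, lap_Wpath_ne (show a.1.1 ≠ j.1 by omega),
      lap_Wpath_ne (show j.1 ≠ b.1.1 by omega)]
    split_ifs <;> first | (exfalso; omega) | ring
  · have hj' : ¬ j.1 % 2 = 1 := fun hcon => hj ((mem_V1c j).2 hcon)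
    rw [if_neg hj, if_neg (fun hcon => hj' hcon.1)]

private lemma S_diag (a : ↥(V1 N)) :
    (∑ j : Fin N,
        if j.1 % 2 = 1 ∧ (a.1.1 + 1 = j.1 ∨ j.1 + 1 = a.1.1)
            ∧ (j.1 + 1 = a.1.1 ∨ a.1.1 + 1 = j.1) then
          (deg (Wpath N) j)⁻¹ else 0)
      = (if a.1.1 + 1 < N then (if a.1.1 + 2 < N then (2 : ℝ)⁻¹ else 1) else 0)
        + (if 0 < a.1.1 then (2 : ℝ)⁻¹ else 0) := by
  have ha : a.1.1 % 2 = 0 := (mem_V1 _).1 a.2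
  have hsplit : ∀ j : Fin N,
      (if j.1 % 2 = 1 ∧ (a.1.1 + 1 = j.1 ∨ j.1 + 1 = a.1.1)
          ∧ (j.1 + 1 = a.1.1 ∨ a.1.1 + 1 = j.1) then (deg (Wpath N) j)⁻¹ else 0)
        = (if j.1 = a.1.1 + 1 then (deg (Wpath N) j)⁻¹ else 0)
          + (if 0 < a.1.1 ∧ j.1 = a.1.1 - 1 then (deg (Wpath N) j)⁻¹ else 0) := by
    intro j
    split_ifs <;> first | (exfalso; omega) | simp
  simp_rw [hsplit]
  rw [Finset.sum_add_distrib, sum_ite_val']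
  have e1 : (if h : a.1.1 + 1 < N then (deg (Wpath N) ⟨a.1.1 + 1, h⟩)⁻¹ else 0)
      = (if a.1.1 + 1 < N then (if a.1.1 + 2 < N then (2 : ℝ)⁻¹ else 1) else 0) := by
    by_cases h1 : a.1.1 + 1 < N
    · rw [dif_pos h1, if_pos h1,
        deg_Wpath_odd ⟨a.1.1 + 1, h1⟩ (by simp only [Fin.val_mk]; omega)]
      simp only [Fin.val_mk]
      split_ifs <;> first | (exfalso; omega) | norm_num
    · rw [dif_neg h1, if_neg h1]
  rw [e1]
  congr 1
  by_cases h0 : 0 < a.1.1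
  · have h2 : ∀ j : Fin N, (if 0 < a.1.1 ∧ j.1 = a.1.1 - 1 then (deg (Wpath N) j)⁻¹ else 0)
        = if j.1 = a.1.1 - 1 then (deg (Wpath N) j)⁻¹ else 0 := fun j => by simp [h0]
    simp_rw [h2]
    rw [sum_ite_val', dif_pos (show a.1.1 - 1 < N by omega), if_pos h0,
      deg_Wpath_odd ⟨a.1.1 - 1, by omega⟩ (by simp only [Fin.val_mk]; omega)]
    rw [if_pos (by simp only [Fin.val_mk]; omega)]
  · have h2 : ∀ j : Fin N, (if 0 < a.1.1 ∧ j.1 = a.1.1 - 1 then (deg (Wpath N) j)⁻¹ else 0)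
        = 0 := fun j => by simp [h0]
    simp_rw [h2]
    rw [if_neg h0, Finset.sum_const_zero]

private lemma S_ne (a b : ↥(V1 N)) (hab : a.1.1 ≠ b.1.1) :
    (∑ j : Fin N,
        if j.1 % 2 = 1 ∧ (a.1.1 + 1 = j.1 ∨ j.1 + 1 = a.1.1)
            ∧ (j.1 + 1 = b.1.1 ∨ b.1.1 + 1 = j.1) then
          (deg (Wpath N) j)⁻¹ else 0)
      = if a.1.1 + 2 = b.1.1 ∨ b.1.1 + 2 = a.1.1 then (2 : ℝ)⁻¹ else 0 := by
  have ha : a.1.1 % 2 = 0 := (mem_V1 _).1 a.2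
  have hb : b.1.1 % 2 = 0 := (mem_V1 _).1 b.2
  have haN : a.1.1 < N := a.1.isLt
  have hbN : b.1.1 < N := b.1.isLt
  by_cases h2 : a.1.1 + 2 = b.1.1
  · have hsplit : ∀ j : Fin N,
        (if j.1 % 2 = 1 ∧ (a.1.1 + 1 = j.1 ∨ j.1 + 1 = a.1.1)
            ∧ (j.1 + 1 = b.1.1 ∨ b.1.1 + 1 = j.1) then (deg (Wpath N) j)⁻¹ else 0)
          = if j.1 = a.1.1 + 1 then (deg (Wpath N) j)⁻¹ else 0 := by
      intro j
      split_ifs <;> first | (exfalso; omega) | rfl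
    simp_rw [hsplit]
    rw [sum_ite_val', dif_pos (show a.1.1 + 1 < N by omega), if_pos (Or.inl h2),
      deg_Wpath_odd ⟨a.1.1 + 1, by omega⟩ (by simp only [Fin.val_mk]; omega),
      if_pos (by simp only [Fin.val_mk]; omega)]
  · by_cases h3 : b.1.1 + 2 = a.1.1
    · have hsplit : ∀ j : Fin N,
          (if j.1 % 2 = 1 ∧ (a.1.1 + 1 = j.1 ∨ j.1 + 1 = a.1.1)
              ∧ (j.1 + 1 = b.1.1 ∨ b.1.1 + 1 = j.1) then (deg (Wpath N) j)⁻¹ else 0)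
            = if j.1 = b.1.1 + 1 then (deg (Wpath N) j)⁻¹ else 0 := by
        intro j
        split_ifs <;> first | (exfalso; omega) | rfl
      simp_rw [hsplit]
      rw [sum_ite_val', dif_pos (show b.1.1 + 1 < N by omega), if_pos (Or.inr h3),
        deg_Wpath_odd ⟨b.1.1 + 1, by omega⟩ (by simp only [Fin.val_mk]; omega),
        if_pos (by simp only [Fin.val_mk]; omega)]
    · rw [if_neg (by omega)]
      refine Finset.sum_eq_zero fun j _ => ?_
      rw [if_neg (by omega)]

private lemma deg_W' (a : ↥(V1 N)) :
    deg (Matrix.of fun a b : ↥(V1 N) =>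
        if a.1.1 + 2 = b.1.1 ∨ b.1.1 + 2 = a.1.1 then (1 / 2 : ℝ) else 0) a
      = (if a.1.1 + 2 < N then (1 / 2 : ℝ) else 0)
        + (if 2 ≤ a.1.1 then (1 / 2 : ℝ) else 0) := by
  have ha : a.1.1 % 2 = 0 := (mem_V1 _).1 a.2
  unfold deg
  simp only [Matrix.of_apply]
  rw [sum_coe_fin (V1 N) (fun j => if a.1.1 + 2 = j.1 ∨ j.1 + 2 = a.1.1 then (1 / 2 : ℝ) else 0)]
  have hsplit : ∀ j : Fin N,
      (if j ∈ V1 N then (if a.1.1 + 2 = j.1 ∨ j.1 + 2 = a.1.1 then (1 / 2 : ℝ) else 0) else 0)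
        = (if j.1 = a.1.1 + 2 then (1 / 2 : ℝ) else 0)
          + (if 2 ≤ a.1.1 ∧ j.1 = a.1.1 - 2 then (1 / 2 : ℝ) else 0) := by
    intro j
    by_cases hj : j ∈ V1 N
    · have hj' : j.1 % 2 = 0 := (mem_V1 j).1 hj
      rw [if_pos hj]
      split_ifs <;> first | (exfalso; omega) | norm_num
    · have hj' : ¬ j.1 % 2 = 0 := fun hcon => hj ((mem_V1 j).2 hcon)
      rw [if_neg hj]
      split_ifs <;> first | (exfalso; omega) | norm_num
  simp_rw [hsplit]
  rw [Finset.sum_add_distrib, sum_ite_val']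
  congr 1
  by_cases h0 : 2 ≤ a.1.1
  · have h2 : ∀ j : Fin N, (if 2 ≤ a.1.1 ∧ j.1 = a.1.1 - 2 then (1 / 2 : ℝ) else 0)
        = if j.1 = a.1.1 - 2 then (1 / 2 : ℝ) else 0 := fun j => by simp [h0]
    simp_rw [h2]
    rw [sum_ite_val', dif_pos (show a.1.1 - 2 < N by omega), if_pos h0]
  · have h2 : ∀ j : Fin N, (if 2 ≤ a.1.1 ∧ j.1 = a.1.1 - 2 then (1 / 2 : ℝ) else 0) = 0 :=
      fun j => by simp [h0]
    simp_rw [h2]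
    rw [if_neg h0, Finset.sum_const_zero]

end auxkron

/-- Kron reduction of the unit-weight path graph on `N ≥ 3` vertices onto the
odd-indexed vertices (indices `0, 2, 4, …` in 0-based labelling, i.e. vertices
`1, 3, 5, …`) is the path graph on those `⌈N/2⌉` vertices with all edge weights `1/2`. -/
theorem kron_reduction_path_graph
    {N : ℕ} (hN : 3 ≤ N) :
    ((Finset.univ.filter fun i : Fin N => i.1 % 2 = 0).card = (N + 1) / 2) ∧
    kron
        (lap (Matrix.of fun i j : Fin N =>
          if i.1 + 1 = j.1 ∨ j.1 + 1 = i.1 then (1 : ℝ) else 0))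
        (Finset.univ.filter fun i : Fin N => i.1 % 2 = 0) =
      lap (Matrix.of
        fun a b : ↥(Finset.univ.filter fun i : Fin N => i.1 % 2 = 0) =>
          if a.1.1 + 2 = b.1.1 ∨ b.1.1 + 2 = a.1.1 then (1 / 2 : ℝ) else 0) := by
  constructor
  · have key : ∀ M : ℕ, (∑ i ∈ Finset.range M, if i % 2 = 0 then 1 else 0) = (M + 1) / 2 := by
      intro M
      induction M with
      | zero => simp
      | succ M ih =>
        rw [Finset.sum_range_succ, ih]
        by_cases h : M % 2 = 0 <;> simp [h] <;> omega
    rw [Finset.card_filter,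
      Fin.sum_univ_eq_sum_range (fun i => if i % 2 = 0 then 1 else 0) N]
    exact key N
  · show kron (lap (Wpath N)) (V1 N) = lap (Matrix.of
      fun a b : ↥(V1 N) => if a.1.1 + 2 = b.1.1 ∨ b.1.1 + 2 = a.1.1 then (1 / 2 : ℝ) else 0)
    ext a b
    have ha : a.1.1 % 2 = 0 := (mem_V1 _).1 a.2
    have hb : b.1.1 % 2 = 0 := (mem_V1 _).1 b.2
    rw [kron_apply, S_eq]
    rcases eq_or_ne a b with rfl | hab
    · rw [lap_Wpath_diag, deg_Wpath, S_diag]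
      have hrhs : lap (Matrix.of
          fun a b : ↥(V1 N) => if a.1.1 + 2 = b.1.1 ∨ b.1.1 + 2 = a.1.1 then (1 / 2 : ℝ) else 0)
            a a
          = (if a.1.1 + 2 < N then (1 / 2 : ℝ) else 0)
            + (if 2 ≤ a.1.1 then (1 / 2 : ℝ) else 0) := by
        unfold lap
        rw [Matrix.sub_apply, Matrix.diagonal_apply_eq, Matrix.of_apply, if_neg (by omega),
          sub_zero, deg_W']
      rw [hrhs]
      split_ifs <;> first | (exfalso; omega) | norm_num
    · have hab' : a.1.1 ≠ b.1.1 := fun h => hab (Subtype.ext (Fin.ext h))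
      rw [lap_Wpath_ne hab', S_ne a b hab']
      have hrhs : lap (Matrix.of
          fun a b : ↥(V1 N) => if a.1.1 + 2 = b.1.1 ∨ b.1.1 + 2 = a.1.1 then (1 / 2 : ℝ) else 0)
            a b
          = 0 - (if a.1.1 + 2 = b.1.1 ∨ b.1.1 + 2 = a.1.1 then (1 / 2 : ℝ) else 0) := by
        unfold lap
        rw [Matrix.sub_apply, Matrix.diagonal_apply_ne _ hab, Matrix.of_apply]
      rw [hrhs, if_neg (show ¬ (a.1.1 + 1 = b.1.1 ∨ b.1.1 + 1 = a.1.1) by omega)]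
      split_ifs <;> norm_num
end
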